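/- arXiv:math/0410505 — 10 statements merged into one kernel-verified Lean document; each statement's English description precedes it below -/
import Mathlib

section
/- Let X be a Cantor set, T : X → X an aperiodic homeomorphism (i.e., T^n x ≠ x for all x ∈ X and all n ≥ 1), and n ≥ 2 a positive integer. Then every point x ∈ X has a clopen neighborhood V such that the sets V, T(V), ..., T^{n-1}(V) are pairwise disjoint. -/
open Set Function

/-- Every point of a Cantor set has, for an aperiodic homeomorphism `T` and `n ≥ 2`,
a clopen neighborhood `V` such that `V, T(V), …, T^{n-1}(V)` are pairwise disjoint. -/
theorem stmt_0 {X : Type*} [TopologicalSpace X] [CompactSpace X] [TopologicalSpace.MetrizableSpace X]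
    [TotallyDisconnectedSpace X] [PerfectSpace X] [Nonempty X]
    (T : X ≃ₜ X) (hT : ∀ (x : X) (m : ℕ), 1 ≤ m → (⇑T)^[m] x ≠ x)
    (n : ℕ) (hn : 2 ≤ n) (x : X) :
    ∃ V : Set X, IsClopen V ∧ x ∈ V ∧
      ∀ i j, i < n → j < n → i ≠ j →
        Disjoint ((⇑T)^[i] '' V) ((⇑T)^[j] '' V) := by
  haveI : T2Space X := inferInstance
  haveI : TotallySeparatedSpace X := loc_compact_t2_tot_disc_iff_tot_sep.mp ‹_›
  have key : ∀ m : ℕ, ∃ W : Set X, IsClopen W ∧ x ∈ W ∧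
      (1 ≤ m → ∀ y ∈ W, (⇑T)^[m] y ∉ W) := by
    intro m
    rcases Nat.eq_zero_or_pos m with rfl | hm
    · exact ⟨univ, isClopen_univ, mem_univ x, fun h => absurd h (by omega)⟩
    · obtain ⟨U, hU, hxU, hTU⟩ :=
        exists_isClopen_of_totally_separated (hT x m hm).symm
      refine ⟨U ∩ (⇑T)^[m] ⁻¹' Uᶜ, ?_, ⟨hxU, hTU⟩, ?_⟩
      · exact hU.inter ((hU.compl).preimage (T.continuous.iterate m))
      · intro _ y hy hy'
        exact hy.2 hy'.1
  choose W hW1 hW2 hW3 using key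
  set V : Set X := ⋂ m ∈ Finset.range n, W m with hV
  have hVsub : ∀ m, m < n → V ⊆ W m := fun m hm =>
    biInter_subset_of_mem (Finset.mem_range.mpr hm)
  have hdisj : ∀ i j, i < j → j < n →
      Disjoint ((⇑T)^[i] '' V) ((⇑T)^[j] '' V) := by
    intro i j hij hj
    rw [Set.disjoint_left]
    rintro z ⟨a, ha, rfl⟩ ⟨b, hb, hab⟩
    have hm1 : 1 ≤ j - i := by omega
    have : (⇑T)^[j] b = (⇑T)^[i] ((⇑T)^[j - i] b) := by
      rw [← Function.iterate_add_apply]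
      congr 1; omega
    rw [this] at hab
    have heq : (⇑T)^[j - i] b = a := (T.injective.iterate i) hab
    have hbW : b ∈ W (j - i) := hVsub _ (by omega) hb
    have haW : (⇑T)^[j - i] b ∈ W (j - i) := heq ▸ hVsub _ (by omega) ha
    exact hW3 (j - i) hm1 b hbW haW
  refine ⟨V, ?_, ?_, ?_⟩
  · exact isClopen_biInter_finset fun m _ => hW1 m
  · exact mem_biInter fun m _ => hW2 m
  · intro i j hi hj hij
    rcases lt_or_gt_of_ne hij with h | h
    · exact hdisj i j h hj
    · exact (hdisj j i h hi).symm
end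

section
/- Let X be a Cantor set and T an aperiodic homeomorphism of X. For every n ≥ 2 there exists a finite cover of X by pairwise disjoint nonempty clopen sets U_1, ..., U_k such that U_i ∩ T^j(U_i) = ∅ for all 1 ≤ i ≤ k and 1 ≤ j ≤ n-1. -/
open Set Function

/-- For each point there is a clopen neighborhood disjoint from its first `n-1` iterates. -/
lemma exists_clopen_nbhd {X : Type*} [TopologicalSpace X] [CompactSpace X] [T2Space X]
    [TotallyDisconnectedSpace X]
    (T : X ≃ₜ X) (hT : ∀ (x : X) (m : ℕ), 1 ≤ m → (⇑T)^[m] x ≠ x)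
    (n : ℕ) (x : X) :
    ∃ V : Set X, IsClopen V ∧ x ∈ V ∧
      ∀ j, 1 ≤ j → j ≤ n - 1 → Disjoint V ((⇑T)^[j] '' V) := by
  have key : ∀ j, 1 ≤ j → ∃ V : Set X, IsClopen V ∧ x ∈ V ∧
      Disjoint V ((⇑T)^[j] '' V) := by
    intro j hj
    have hne : (⇑T)^[j] x ≠ x := hT x j hj
    obtain ⟨A, B, hA, hB, hxA, hxB, hAB⟩ := t2_separation hne.symm
    have hcont : Continuous ((⇑T)^[j]) := (T.continuous).iterate j
    have hopen : IsOpen (A ∩ (⇑T)^[j] ⁻¹' B) := hA.inter (hB.preimage hcont)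
    have hmem : x ∈ A ∩ (⇑T)^[j] ⁻¹' B := ⟨hxA, hxB⟩
    obtain ⟨V, hV, hxV, hVsub⟩ := compact_exists_isClopen_in_isOpen hopen hmem
    refine ⟨V, hV, hxV, ?_⟩
    refine Set.disjoint_left.mpr fun y hyV hyim => ?_
    obtain ⟨z, hzV, rfl⟩ := hyim
    exact hAB.le_bot ⟨(hVsub hyV).1, (hVsub hzV).2⟩
  choose W hWclopen hWmem hWdisj using fun j : Finset.Icc 1 (n-1) =>
    key j.1 (Finset.mem_Icc.mp j.2).1
  refine ⟨⋂ j, W j, ?_, Set.mem_iInter.mpr fun j => hWmem j, ?_⟩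
  · exact isClopen_iInter_of_finite fun j => hWclopen j
  · intro j hj1 hj2
    have hjmem : j ∈ Finset.Icc 1 (n-1) := Finset.mem_Icc.mpr ⟨hj1, hj2⟩
    exact Disjoint.mono (Set.iInter_subset _ (⟨j, hjmem⟩ : Finset.Icc 1 (n-1)))
      (Set.image_mono (Set.iInter_subset _ (⟨j, hjmem⟩ : Finset.Icc 1 (n-1))))
      (hWdisj ⟨j, hjmem⟩)

/-- For an aperiodic homeomorphism `T` of a Cantor set and `n ≥ 2`, there is a finite cover
of `X` by pairwise disjoint nonempty clopen sets `U_1, …, U_k` with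
`U_i ∩ T^j(U_i) = ∅` for `1 ≤ j ≤ n-1`. -/
theorem stmt_1 {X : Type*} [TopologicalSpace X] [CompactSpace X]
    [TopologicalSpace.MetrizableSpace X] [TotallyDisconnectedSpace X] [PerfectSpace X]
    [Nonempty X]
    (T : X ≃ₜ X) (hT : ∀ (x : X) (m : ℕ), 1 ≤ m → (⇑T)^[m] x ≠ x)
    (n : ℕ) (hn : 2 ≤ n) :
    ∃ (k : ℕ) (U : Fin k → Set X),
      (∀ i, IsClopen (U i)) ∧ (∀ i, (U i).Nonempty) ∧
      (∀ i j, i ≠ j → Disjoint (U i) (U j)) ∧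
      (⋃ i, U i) = univ ∧
      (∀ i, ∀ j, 1 ≤ j → j ≤ n - 1 → Disjoint (U i) ((⇑T)^[j] '' U i)) := by
  letI := TopologicalSpace.metrizableSpaceMetric X
  choose V hVclopen hVmem hVdisj using exists_clopen_nbhd T hT n
  -- finite subcover
  obtain ⟨s, hs⟩ := IsCompact.elim_finite_subcover isCompact_univ V
    (fun x => (hVclopen x).2) (fun x _ => Set.mem_iUnion.mpr ⟨x, hVmem x⟩)
  set L := s.toList with hL
  -- disjointify
  set W : Fin L.length → Set X := fun i => V (L.get i) \ ⋃ i' : Fin L.length, ⋃ _ : i' < i, V (L.get i') with hW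
  have hWclopen : ∀ i, IsClopen (W i) := by
    intro i
    exact (hVclopen _).diff (isClopen_iUnion_of_finite fun i' =>
      isClopen_iUnion_of_finite fun _ => hVclopen _)
  have hWsub : ∀ i, W i ⊆ V (L.get i) := fun i => Set.diff_subset
  have hWdisjpair : ∀ i j : Fin L.length, i ≠ j → Disjoint (W i) (W j) := by
    intro i j hij
    rcases hij.lt_or_gt with h | h
    · refine Set.disjoint_left.mpr fun y hyi hyj => ?_
      exact hyj.2 (Set.mem_iUnion.mpr ⟨i, Set.mem_iUnion.mpr ⟨h, hWsub i hyi⟩⟩)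
    · refine Set.disjoint_left.mpr fun y hyi hyj => ?_
      exact hyi.2 (Set.mem_iUnion.mpr ⟨j, Set.mem_iUnion.mpr ⟨h, hWsub j hyj⟩⟩)
  have hWunion : (⋃ i, W i) = univ := by
    apply Set.eq_univ_of_forall
    intro y
    have hy : y ∈ ⋃ x ∈ s, V x := hs (Set.mem_univ y)
    obtain ⟨x, hxs, hyx⟩ := Set.mem_iUnion₂.mp hy
    have hxL : x ∈ L := Finset.mem_toList.mpr hxs
    obtain ⟨i0, hi0⟩ := List.mem_iff_get.mp hxL
    -- take the least index i with y ∈ V (L.get i)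
    classical
    have hex : ∃ m : ℕ, ∃ h : m < L.length, y ∈ V (L.get ⟨m, h⟩) := ⟨i0, i0.2, hi0 ▸ hyx⟩
    obtain ⟨hm, hym⟩ := Nat.find_spec hex
    refine Set.mem_iUnion.mpr ⟨⟨Nat.find hex, hm⟩, hym, ?_⟩
    intro hmem
    obtain ⟨i', hi'⟩ := Set.mem_iUnion.mp hmem
    obtain ⟨hlt, hyi'⟩ := Set.mem_iUnion.mp hi'
    exact Nat.find_min hex hlt ⟨i'.2, hyi'⟩
  -- restrict to nonempty pieces
  classical
  let S := {i : Fin L.length // (W i).Nonempty}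
  let e := (Fintype.equivFin S).symm
  refine ⟨Fintype.card S, fun m => W (e m).1, fun m => hWclopen _, fun m => (e m).2, ?_, ?_, ?_⟩
  · intro i j hij
    apply hWdisjpair
    intro h
    exact hij (e.injective (Subtype.ext h))
  · apply Set.eq_univ_of_forall
    intro y
    have : y ∈ ⋃ i, W i := hWunion ▸ Set.mem_univ y
    obtain ⟨i, hi⟩ := Set.mem_iUnion.mp this
    exact Set.mem_iUnion.mpr ⟨e.symm ⟨i, ⟨y, hi⟩⟩, by simpa using hi⟩
  · intro m j hj1 hj2
    exact Disjoint.mono (hWsub _) (Set.image_mono (hWsub _)) (hVdisj _ j hj1 hj2)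
end

section
/- Let X be a Cantor set and T an aperiodic homeomorphism of X. Given n ≥ 2, there exists a partition of X into finitely many clopen T-towers ξ_1, ..., ξ_m such that the height of every tower is at least n. That is, there exist clopen sets B_1, ..., B_m and integers h_1, ..., h_m ≥ n such that the sets T^j(B_i) for 1 ≤ i ≤ m, 0 ≤ j ≤ h_i − 1 are pairwise disjoint and their union is X. -/
open Set Function

section TowerAux

variable {X : Type*} [TopologicalSpace X]

lemma tw_left_inv (T : X ≃ₜ X) (a : ℕ) (x : X) : (⇑T)^[a] ((⇑T.symm)^[a] x) = x :=
  (Function.LeftInverse.iterate (fun y => T.apply_symm_apply y) a) x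

lemma tw_right_inv (T : X ≃ₜ X) (a : ℕ) (x : X) : (⇑T.symm)^[a] ((⇑T)^[a] x) = x :=
  (Function.LeftInverse.iterate (fun y => T.symm_apply_apply y) a) x

lemma tw_cancel_le (T : X ≃ₜ X) (a b : ℕ) (h : a ≤ b) (x : X) :
    (⇑T)^[a] ((⇑T.symm)^[b] x) = (⇑T.symm)^[b - a] x := by
  conv_lhs => rw [show b = a + (b - a) by omega, Function.iterate_add_apply]
  rw [tw_left_inv]

lemma tw_cancel_ge (T : X ≃ₜ X) (a b : ℕ) (h : b ≤ a) (x : X) :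
    (⇑T)^[a] ((⇑T.symm)^[b] x) = (⇑T)^[a - b] x := by
  conv_lhs => rw [show a = (a - b) + b by omega, Function.iterate_add_apply, tw_left_inv]

lemma tw_image_eq_preimage (T : X ≃ₜ X) (j : ℕ) (A : Set X) :
    (⇑T)^[j] '' A = (⇑T.symm)^[j] ⁻¹' A := by
  ext x
  constructor
  · rintro ⟨a, ha, rfl⟩
    simpa [Set.mem_preimage, tw_right_inv] using ha
  · intro hx
    exact ⟨_, hx, tw_left_inv T j x⟩

lemma tw_isClopen_image (T : X ≃ₜ X) (j : ℕ) {A : Set X} (hA : IsClopen A) :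
    IsClopen ((⇑T)^[j] '' A) := by
  rw [tw_image_eq_preimage]
  exact hA.preimage (T.symm.continuous.iterate j)

/-- `n`-separated set: no point returns to the set in fewer than `n` steps. -/
def SepSet (T : X ≃ₜ X) (n : ℕ) (A : Set X) : Prop :=
  ∀ a ∈ A, ∀ j, 1 ≤ j → j < n → (⇑T)^[j] a ∉ A

/-- Symmetric `n`-neighbourhood of a set under the dynamics. -/
def nbhdN (T : X ≃ₜ X) (n : ℕ) (A : Set X) : Set X :=
  ⋃ j ∈ Finset.range n, ((⇑T)^[j] '' A ∪ (⇑T.symm)^[j] '' A)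

lemma mem_nbhdN {T : X ≃ₜ X} {n : ℕ} {A : Set X} {x : X} :
    x ∈ nbhdN T n A ↔ ∃ j < n, ((⇑T.symm)^[j] x ∈ A ∨ (⇑T)^[j] x ∈ A) := by
  simp only [nbhdN, Set.mem_iUnion, Finset.mem_range, Set.mem_union, exists_prop,
    tw_image_eq_preimage T, tw_image_eq_preimage T.symm, Homeomorph.symm_symm,
    Set.mem_preimage]

lemma nbhdN_mono (T : X ≃ₜ X) (n : ℕ) {A A' : Set X} (h : A ⊆ A') :
    nbhdN T n A ⊆ nbhdN T n A' := by
  intro x hx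
  rw [mem_nbhdN] at hx ⊢
  obtain ⟨j, hj, hc⟩ := hx
  exact ⟨j, hj, hc.imp (fun h' => h h') (fun h' => h h')⟩

lemma nbhdN_isClopen (T : X ≃ₜ X) (n : ℕ) {A : Set X} (hA : IsClopen A) :
    IsClopen (nbhdN T n A) := by
  apply isClopen_biUnion_finset
  intro j _
  exact (tw_isClopen_image T j hA).union (tw_isClopen_image T.symm j hA)

/-- Inductive construction of a separated set swallowing each member of the list. -/
def buildA (T : X ≃ₜ X) (n : ℕ) : List (Set X) → Set X
  | [] => ∅
  | U :: L => buildA T n L ∪ (U \ nbhdN T n (buildA T n L))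

lemma buildA_isClopen (T : X ≃ₜ X) (n : ℕ) :
    ∀ L : List (Set X), (∀ U ∈ L, IsClopen U) → IsClopen (buildA T n L)
  | [], _ => isClopen_empty
  | U :: L, h => by
    have hA := buildA_isClopen T n L (fun V hV => h V (List.mem_cons_of_mem _ hV))
    exact hA.union ((h U (List.mem_cons_self)).diff (nbhdN_isClopen T n hA))

lemma buildA_sep (T : X ≃ₜ X) (n : ℕ) :
    ∀ L : List (Set X), (∀ U ∈ L, SepSet T n U) → SepSet T n (buildA T n L)
  | [], _ => fun a ha => absurd ha (Set.notMem_empty a)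
  | U :: L, h => by
    have hA := buildA_sep T n L (fun V hV => h V (List.mem_cons_of_mem _ hV))
    intro a ha j hj1 hjn hja
    rcases ha with ha | ha
    · rcases hja with hja | hja
      · exact hA a ha j hj1 hjn hja
      · exact hja.2 (mem_nbhdN.2 ⟨j, hjn, Or.inl (by rwa [tw_right_inv])⟩)
    · rcases hja with hja | hja
      · exact ha.2 (mem_nbhdN.2 ⟨j, hjn, Or.inr hja⟩)
      · exact h U (List.mem_cons_self) a ha.1 j hj1 hjn hja.1

lemma buildA_cover (T : X ≃ₜ X) (n : ℕ) :
    ∀ L : List (Set X), ∀ U ∈ L, U ⊆ buildA T n L ∪ nbhdN T n (buildA T n L)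
  | U' :: L, U, hU => by
    rcases List.mem_cons.1 hU with rfl | hU
    · intro x hx
      by_cases hxN : x ∈ nbhdN T n (buildA T n L)
      · exact Or.inr (nbhdN_mono T n Set.subset_union_left hxN)
      · exact Or.inl (Or.inr ⟨hx, hxN⟩)
    · intro x hx
      rcases buildA_cover T n L U hU hx with h | h
      · exact Or.inl (Or.inl h)
      · exact Or.inr (nbhdN_mono T n Set.subset_union_left h)

end TowerAux

/-- Proposition 1 (covering by towers): an aperiodic homeomorphism of a Cantor set admits,
for every `n ≥ 2`, a partition of `X` into finitely many clopen `T`-towers of height at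
least `n`: clopen bases `B_1, …, B_m` and heights `h_i ≥ n` such that the sets
`T^j(B_i)` (`0 ≤ j ≤ h_i - 1`) are pairwise disjoint and cover `X`. -/
theorem stmt_2 {X : Type*} [TopologicalSpace X] [CompactSpace X]
    [TopologicalSpace.MetrizableSpace X] [TotallyDisconnectedSpace X] [PerfectSpace X]
    [Nonempty X]
    (T : X ≃ₜ X) (hT : ∀ (x : X) (m : ℕ), 1 ≤ m → (⇑T)^[m] x ≠ x)
    (n : ℕ) (hn : 2 ≤ n) :
    ∃ (m : ℕ) (B : Fin m → Set X) (h : Fin m → ℕ),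
      (∀ i, IsClopen (B i)) ∧ (∀ i, n ≤ h i) ∧
      (∀ i j i' j', j < h i → j' < h i' → (i, j) ≠ (i', j') →
        Disjoint ((⇑T)^[j] '' B i) ((⇑T)^[j'] '' B i')) ∧
      (⋃ i, ⋃ j ∈ Finset.range (h i), (⇑T)^[j] '' B i) = univ := by
  classical
  have hn1 : 1 ≤ n := by omega
  -- Step 1: every point has a clopen n-separated neighbourhood.
  have step1 : ∀ x : X, ∃ U : Set X, IsClopen U ∧ x ∈ U ∧ SepSet T n U := by
    intro x
    have hsep : ∀ k : ℕ, ∃ V W : Set X, IsOpen V ∧ IsOpen W ∧ x ∈ V ∧ Disjoint V W ∧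
        (1 ≤ k → k < n → (⇑T)^[k] x ∈ W) := by
      intro k
      by_cases hk : 1 ≤ k ∧ k < n
      · obtain ⟨V, W, hV, hW, hxV, hxW, hVW⟩ := t2_separation (hT x k hk.1).symm
        exact ⟨V, W, hV, hW, hxV, hVW, fun _ _ => hxW⟩
      · exact ⟨Set.univ, ∅, isOpen_univ, isOpen_empty, Set.mem_univ x, by simp,
          fun h1 h2 => absurd ⟨h1, h2⟩ hk⟩
    choose V W hVo hWo hxV hVW hTW using hsep
    set O : Set X := ⋂ k ∈ Finset.Ico 1 n, (V k ∩ (⇑T)^[k] ⁻¹' (W k)) with hO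
    have hOopen : IsOpen O :=
      isOpen_biInter_finset fun k _ => (hVo k).inter ((hWo k).preimage (T.continuous.iterate k))
    have hxO : x ∈ O := by
      rw [hO, Set.mem_iInter₂]
      intro k hk
      rw [Finset.mem_Ico] at hk
      exact ⟨hxV k, hTW k hk.1 hk.2⟩
    obtain ⟨U, hUc, hxU, hUO⟩ :=
      isTopologicalBasis_isClopen.exists_subset_of_mem_open hxO hOopen
    refine ⟨U, hUc, hxU, ?_⟩
    intro a ha j hj1 hjn hja
    have h1 := hUO ha
    have h2 := hUO hja
    rw [hO, Set.mem_iInter₂] at h1 h2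
    have hjmem : j ∈ Finset.Ico 1 n := Finset.mem_Ico.2 ⟨hj1, hjn⟩
    exact (Set.disjoint_left.1 (hVW j)) (h2 j hjmem).1 (h1 j hjmem).2
  choose U hUc hxU hUsep using step1
  -- Step 2: finite subcover.
  obtain ⟨t, ht⟩ := isCompact_univ.elim_finite_subcover U (fun x => (hUc x).isOpen)
    (fun x _ => Set.mem_iUnion.2 ⟨x, hxU x⟩)
  set L : List (Set X) := t.toList.map U with hL
  have hLc : ∀ S ∈ L, IsClopen S := by
    intro S hS
    obtain ⟨x, _, rfl⟩ := List.mem_map.1 hS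
    exact hUc x
  have hLsep : ∀ S ∈ L, SepSet T n S := by
    intro S hS
    obtain ⟨x, _, rfl⟩ := List.mem_map.1 hS
    exact hUsep x
  set A : Set X := buildA T n L with hA
  have hAc : IsClopen A := buildA_isClopen T n L hLc
  have hAsep : SepSet T n A := buildA_sep T n L hLsep
  -- coverage by the symmetric n-neighbourhood of A
  have hAcov : ∀ x : X, ∃ j < n, ((⇑T.symm)^[j] x ∈ A ∨ (⇑T)^[j] x ∈ A) := by
    intro x
    obtain ⟨y, hy⟩ := Set.mem_iUnion.1 (ht (Set.mem_univ x))
    obtain ⟨hyt, hxy⟩ := Set.mem_iUnion.1 hy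
    have hUL : U y ∈ L := List.mem_map.2 ⟨y, Finset.mem_toList.2 hyt, rfl⟩
    rcases buildA_cover T n L (U y) hUL hxy with h | h
    · exact ⟨0, by omega, Or.inl h⟩
    · exact mem_nbhdN.1 h
  -- Step 3: backward and forward hitting.
  have hback : ∀ x : X, ∃ k, (⇑T.symm)^[k] x ∈ A := by
    intro x
    obtain ⟨j, hj, hc⟩ := hAcov ((⇑T.symm)^[n - 1] x)
    rcases hc with h | h
    · exact ⟨j + (n - 1), by rwa [Function.iterate_add_apply]⟩
    · refine ⟨(n - 1) - j, ?_⟩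
      rwa [← tw_cancel_le T j (n - 1) (by omega)]
  have hforward : ∀ x : X, ∃ k, 1 ≤ k ∧ k ≤ 2 * n - 1 ∧ (⇑T)^[k] x ∈ A := by
    intro x
    obtain ⟨j, hj, hc⟩ := hAcov ((⇑T)^[n] x)
    rcases hc with h | h
    · refine ⟨n - j, by omega, by omega, ?_⟩
      have := tw_cancel_le T.symm j n (by omega) x
      rw [Homeomorph.symm_symm] at this
      rwa [this] at h
    · exact ⟨j + n, by omega, by omega, by rwa [Function.iterate_add_apply]⟩
  -- Step 4: the towers.
  refine ⟨n, fun i => A ∩ (⇑T)^[n + (i : ℕ)] ⁻¹' A ∩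
      ⋂ k ∈ Finset.Ico 1 (n + (i : ℕ)), ((⇑T)^[k] ⁻¹' A)ᶜ,
    fun i => n + (i : ℕ), ?_, fun i => Nat.le_add_right n i, ?_, ?_⟩
  · intro i
    refine (hAc.inter (hAc.preimage (T.continuous.iterate _))).inter
      (isClopen_biInter_finset fun k _ => (hAc.preimage (T.continuous.iterate k)).compl)
  · -- disjointness
    have key : ∀ (i i' : Fin n) (j j' : ℕ), j < n + (i : ℕ) → j' < n + (i' : ℕ) → j ≤ j' →
        (i, j) ≠ (i', j') →
        Disjoint ((⇑T)^[j] '' (A ∩ (⇑T)^[n + (i : ℕ)] ⁻¹' A ∩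
            ⋂ k ∈ Finset.Ico 1 (n + (i : ℕ)), ((⇑T)^[k] ⁻¹' A)ᶜ))
          ((⇑T)^[j'] '' (A ∩ (⇑T)^[n + (i' : ℕ)] ⁻¹' A ∩
            ⋂ k ∈ Finset.Ico 1 (n + (i' : ℕ)), ((⇑T)^[k] ⁻¹' A)ᶜ)) := by
      intro i i' j j' hj hj' hle hne
      rw [Set.disjoint_left]
      rintro y ⟨a, ha, rfl⟩ ⟨a', ha', hy⟩
      have hinj : Function.Injective ((⇑T) : X → X) := T.injective
      have heq : (⇑T)^[j] ((⇑T)^[j' - j] a') = (⇑T)^[j] a := by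
        rw [← Function.iterate_add_apply, show j + (j' - j) = j' by omega, hy]
      have haa : (⇑T)^[j' - j] a' = a := (hinj.iterate j) heq
      rcases Nat.eq_or_lt_of_le hle with rfl | hlt
      · -- j = j'
        simp only [Nat.sub_self, Function.iterate_zero_apply] at haa
        subst haa
        have hii : (i : ℕ) ≠ (i' : ℕ) := by
          intro h
          exact hne (by rw [Prod.mk.injEq]; exact ⟨Fin.ext h, rfl⟩)
        rcases Nat.lt_or_ge (n + (i : ℕ)) (n + (i' : ℕ)) with hlt' | hge
        · have h3 := ha'.2
          rw [Set.mem_iInter₂] at h3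
          exact h3 (n + (i : ℕ)) (Finset.mem_Ico.2 ⟨by omega, hlt'⟩) ha.1.2
        · have hlt'' : n + (i' : ℕ) < n + (i : ℕ) := by omega
          have h3 := ha.2
          rw [Set.mem_iInter₂] at h3
          exact h3 (n + (i' : ℕ)) (Finset.mem_Ico.2 ⟨by omega, hlt''⟩) ha'.1.2
      · -- j < j'
        have h3 := ha'.2
        rw [Set.mem_iInter₂] at h3
        have : (⇑T)^[j' - j] a' ∉ A :=
          h3 (j' - j) (Finset.mem_Ico.2 ⟨by omega, by omega⟩)
        rw [haa] at this
        exact this ha.1.1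
    intro i j i' j' hj hj' hne
    rcases le_total j j' with hle | hle
    · exact key i i' j j' hj hj' hle hne
    · exact (key i' i j' j hj' hj hle (Ne.symm hne)).symm
  · -- covering
    refine Set.eq_univ_of_forall fun x => ?_
    have hbx := hback x
    set k0 := Nat.find hbx with hk0def
    have hk0A : (⇑T.symm)^[k0] x ∈ A := Nat.find_spec hbx
    set a := (⇑T.symm)^[k0] x with hadef
    obtain ⟨w, hw1, hw2, hwA⟩ := hforward a
    have hrex : ∃ r, 1 ≤ r ∧ (⇑T)^[r] a ∈ A := ⟨w, hw1, hwA⟩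
    set r := Nat.find hrex with hrdef
    have hr1 : 1 ≤ r := (Nat.find_spec hrex).1
    have hrA : (⇑T)^[r] a ∈ A := (Nat.find_spec hrex).2
    have hrw : r ≤ 2 * n - 1 := le_trans (Nat.find_min' hrex ⟨hw1, hwA⟩) hw2
    have hrn : n ≤ r := by
      by_contra h
      push_neg at h
      exact hAsep a hk0A r hr1 h hrA
    have hi : r - n < n := by omega
    set i : Fin n := ⟨r - n, hi⟩ with hidef
    have hni : n + (i : ℕ) = r := by
      simp only [hidef]
      omega
    have hk0r : k0 < r := by
      by_contra h
      push_neg at h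
      have h1 : (⇑T.symm)^[k0 - r] x ∈ A := by
        have hc := tw_cancel_le T r k0 h x
        rw [hadef] at hrA
        rwa [hc] at hrA
      exact Nat.find_min hbx (show k0 - r < k0 by omega) h1
    refine Set.mem_iUnion.2 ⟨i, Set.mem_iUnion₂.2 ⟨k0, Finset.mem_range.2 (show k0 < n + (i : ℕ) by omega), ?_⟩⟩
    refine ⟨a, ⟨⟨hk0A, ?_⟩, ?_⟩, by rw [hadef]; exact tw_left_inv T k0 x⟩
    · rw [Set.mem_preimage, hni]
      exact hrA
    · rw [Set.mem_iInter₂]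
      intro k hk
      rw [Finset.mem_Ico] at hk
      intro hkA
      exact Nat.find_min hrex (show k < r by omega) ⟨hk.1, hkA⟩
end

section
/- Let X be a Cantor set and T an aperiodic homeomorphism of X. Suppose there exist a clopen set F ⊆ X and N ∈ ℕ such that X = F ∪ T(F) ∪ ... ∪ T^N(F). Then for every integer n ≥ N there is a finite partition of X into clopen T-towers, each of height at least n, such that the union of the bases of these towers is contained in F. -/
open Set Function

section Aux

variable {X : Type*} [TopologicalSpace X]

private lemma gf_iter (T : X ≃ₜ X) (j : ℕ) (x : X) : (⇑T.symm)^[j] ((⇑T)^[j] x) = x :=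
  (Function.LeftInverse.iterate T.symm_apply_apply j) x

private lemma fg_iter (T : X ≃ₜ X) (j : ℕ) (x : X) : (⇑T)^[j] ((⇑T.symm)^[j] x) = x :=
  (Function.LeftInverse.iterate T.apply_symm_apply j) x

private lemma g_f_of_le (T : X ≃ₜ X) {i j : ℕ} (h : i ≤ j) (x : X) :
    (⇑T.symm)^[i] ((⇑T)^[j] x) = (⇑T)^[j - i] x := by
  conv_lhs => rw [← Nat.add_sub_cancel' h, Function.iterate_add_apply]
  exact gf_iter T i _

private lemma f_g_of_le (T : X ≃ₜ X) {i j : ℕ} (h : i ≤ j) (x : X) :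
    (⇑T)^[i] ((⇑T.symm)^[j] x) = (⇑T.symm)^[j - i] x := by
  conv_lhs => rw [← Nat.add_sub_cancel' h, Function.iterate_add_apply]
  exact fg_iter T i _

private lemma mem_image_iter (T : X ≃ₜ X) (i : ℕ) (S : Set X) (x : X) :
    x ∈ (⇑T)^[i] '' S ↔ (⇑T.symm)^[i] x ∈ S := by
  constructor
  · rintro ⟨z, hz, rfl⟩; rwa [gf_iter]
  · intro h; exact ⟨_, h, fg_iter T i x⟩

private lemma mem_image_iter_symm (T : X ≃ₜ X) (i : ℕ) (S : Set X) (x : X) :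
    x ∈ (⇑T.symm)^[i] '' S ↔ (⇑T)^[i] x ∈ S := by
  constructor
  · rintro ⟨z, hz, rfl⟩; rwa [fg_iter]
  · intro h; exact ⟨_, h, gf_iter T i x⟩

private lemma isClopen_iter_image (T : X ≃ₜ X) (i : ℕ) {S : Set X} (hS : IsClopen S) :
    IsClopen ((⇑T)^[i] '' S) := by
  have : (⇑T)^[i] '' S = (⇑T.symm)^[i] ⁻¹' S := by
    ext x; simp [mem_image_iter T i S x]
  rw [this]
  exact hS.preimage (T.symm.continuous.iterate i)

private lemma isClopen_iter_image_symm (T : X ≃ₜ X) (i : ℕ) {S : Set X} (hS : IsClopen S) :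
    IsClopen ((⇑T.symm)^[i] '' S) := by
  have : (⇑T.symm)^[i] '' S = (⇑T)^[i] ⁻¹' S := by
    ext x; simp [mem_image_iter_symm T i S x]
  rw [this]
  exact hS.preimage (T.continuous.iterate i)

/-- Greedy construction of a marker set from a finite list of locally `n`-separated sets. -/
private lemma greedy (T : X ≃ₜ X) (F : Set X) (n : ℕ) (L : List (Set X))
    (hL : ∀ V ∈ L, IsClopen V ∧ V ⊆ F ∧ ∀ y ∈ V, ∀ i, 1 ≤ i → i ≤ n → (⇑T)^[i] y ∉ V) :
    ∃ G : Set X, IsClopen G ∧ G ⊆ F ∧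
      (∀ x ∈ G, ∀ i, 1 ≤ i → i ≤ n → (⇑T)^[i] x ∉ G) ∧
      (∀ V ∈ L, ∀ y ∈ V, ∃ i ≤ n, (⇑T)^[i] y ∈ G ∨ (⇑T.symm)^[i] y ∈ G) := by
  induction L with
  | nil => exact ⟨∅, isClopen_empty, empty_subset _, by simp, by simp⟩
  | cons V L ih =>
    obtain ⟨G, hGc, hGF, hGd, hGcov⟩ := ih (fun W h => hL W (List.mem_cons_of_mem _ h))
    obtain ⟨hVc, hVF, hVd⟩ := hL V List.mem_cons_self
    set D : Set X := ⋃ i ∈ Finset.range (n+1), ((⇑T)^[i] '' G ∪ (⇑T.symm)^[i] '' G) with hD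
    have hDc : IsClopen D :=
      isClopen_biUnion_finset fun i _ =>
        (isClopen_iter_image T i hGc).union (isClopen_iter_image_symm T i hGc)
    have hmemD : ∀ x, x ∈ D ↔ ∃ i ≤ n, (⇑T.symm)^[i] x ∈ G ∨ (⇑T)^[i] x ∈ G := by
      intro x
      simp only [hD, mem_iUnion, Finset.mem_range, mem_union, Nat.lt_succ_iff]
      constructor
      · rintro ⟨i, hin, hx | hx⟩
        · exact ⟨i, hin, Or.inl ((mem_image_iter T i G x).mp hx)⟩
        · exact ⟨i, hin, Or.inr ((mem_image_iter_symm T i G x).mp hx)⟩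
      · rintro ⟨i, hin, hx | hx⟩
        · exact ⟨i, hin, Or.inl ((mem_image_iter T i G x).mpr hx)⟩
        · exact ⟨i, hin, Or.inr ((mem_image_iter_symm T i G x).mpr hx)⟩
    have hGD : G ⊆ D := by
      intro x hx
      rw [hmemD]
      exact ⟨0, Nat.zero_le _, Or.inl hx⟩
    refine ⟨G ∪ (V \ D), hGc.union (hVc.diff hDc), union_subset hGF ((diff_subset).trans hVF),
      ?_, ?_⟩
    · rintro x hx i hi1 hin hfx
      have hGd' : ∀ z ∈ G, (⇑T.symm)^[i] z ∉ G := by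
        intro z hz hzz
        exact hGd _ hzz i hi1 hin (by rwa [fg_iter])
      rcases hx with hx | hx <;> rcases hfx with hfx | hfx
      · exact hGd x hx i hi1 hin hfx
      · exact hfx.2 ((hmemD _).mpr ⟨i, hin, Or.inl (by rwa [gf_iter])⟩)
      · exact hx.2 ((hmemD _).mpr ⟨i, hin, Or.inr hfx⟩)
      · exact hVd x hx.1 i hi1 hin hfx.1
    · intro W hW y hy
      rcases List.mem_cons.mp hW with rfl | hW
      · by_cases hyD : y ∈ D
        · obtain ⟨i, hin, hi⟩ := (hmemD y).mp hyD
          rcases hi with hi | hi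
          · exact ⟨i, hin, Or.inr (Or.inl hi)⟩
          · exact ⟨i, hin, Or.inl (Or.inl hi)⟩
        · exact ⟨0, Nat.zero_le _, Or.inl (Or.inr ⟨hy, hyD⟩)⟩
      · obtain ⟨i, hin, hi⟩ := hGcov W hW y hy
        exact ⟨i, hin, hi.imp (fun h => Or.inl h) (fun h => Or.inl h)⟩

/-- The marker lemma: a clopen `G ⊆ F` with no returns up to time `n`
whose `±n`-orbit covers `F`. -/
private lemma marker [CompactSpace X] [T2Space X] [TotallyDisconnectedSpace X]
    (T : X ≃ₜ X) (hT : ∀ (x : X) (m : ℕ), 1 ≤ m → (⇑T)^[m] x ≠ x)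
    {F : Set X} (hF : IsClopen F) (n : ℕ) :
    ∃ G : Set X, IsClopen G ∧ G ⊆ F ∧
      (∀ x ∈ G, ∀ i, 1 ≤ i → i ≤ n → (⇑T)^[i] x ∉ G) ∧
      (∀ y ∈ F, ∃ i ≤ n, (⇑T)^[i] y ∈ G ∨ (⇑T.symm)^[i] y ∈ G) := by
  haveI : TotallySeparatedSpace X := loc_compact_t2_tot_disc_iff_tot_sep.mp ‹_›
  -- local separation: around each point of F a clopen V ⊆ F with no returns ≤ n
  have hloc : ∀ x : X, x ∈ F → ∃ V : Set X, IsClopen V ∧ x ∈ V ∧ V ⊆ F ∧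
      ∀ y ∈ V, ∀ i, 1 ≤ i → i ≤ n → (⇑T)^[i] y ∉ V := by
    intro x hx
    have hW : ∀ i : ℕ, ∃ W : Set X, IsClopen W ∧ x ∈ W ∧ (1 ≤ i → (⇑T.symm)^[i] x ∉ W) := by
      intro i
      rcases Nat.eq_zero_or_pos i with rfl | hi
      · exact ⟨univ, isClopen_univ, mem_univ x, by simp⟩
      · have hne : (⇑T.symm)^[i] x ≠ x := by
          intro h
          have h2 := fg_iter T i x
          rw [h] at h2
          exact hT x i hi h2
        obtain ⟨U, hU, hxU, hyU⟩ := exists_isClopen_of_totally_separated hne.symm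
        exact ⟨U, hU, hxU, fun _ => hyU⟩
    choose W hWc hWx hWy using hW
    refine ⟨F ∩ ⋂ i ∈ Finset.Icc 1 n, (W i \ (⇑T)^[i] '' W i), ?_, ?_, inter_subset_left, ?_⟩
    · exact hF.inter (isClopen_biInter_finset fun i _ =>
        (hWc i).diff (isClopen_iter_image T i (hWc i)))
    · refine ⟨hx, ?_⟩
      simp only [mem_iInter, Finset.mem_Icc]
      rintro i ⟨hi1, hin⟩
      refine ⟨hWx i, fun hmem => ?_⟩
      rw [mem_image_iter] at hmem
      exact hWy i hi1 hmem
    · intro y hy i hi1 hin hfy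
      have h1 : y ∈ W i := by
        have := hy.2
        simp only [mem_iInter, Finset.mem_Icc] at this
        exact (this i ⟨hi1, hin⟩).1
      have h2 : (⇑T)^[i] y ∉ (⇑T)^[i] '' W i := by
        have := hfy.2
        simp only [mem_iInter, Finset.mem_Icc] at this
        exact (this i ⟨hi1, hin⟩).2
      exact h2 ⟨y, h1, rfl⟩
  choose! V hVc hVx hVF hVd using hloc
  -- finite subcover of F
  have hcpt : IsCompact F := hF.isClosed.isCompact
  obtain ⟨t, ht⟩ := hcpt.elim_finite_subcover (fun x : F => V ↑x)
    (fun x => (hVc ↑x x.2).2) (fun y hy => mem_iUnion.mpr ⟨⟨y, hy⟩, hVx y hy⟩)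
  obtain ⟨G, hGc, hGF, hGd, hGcov⟩ := greedy T F n (t.toList.map (fun x : ↥F => V ↑x))
    (by
      intro W hW
      rw [List.mem_map] at hW
      obtain ⟨x, -, rfl⟩ := hW
      exact ⟨hVc ↑x x.2, hVF ↑x x.2, hVd ↑x x.2⟩)
  refine ⟨G, hGc, hGF, hGd, ?_⟩
  intro y hy
  obtain ⟨x, hxt, hyx⟩ := mem_iUnion₂.mp (ht hy)
  refine hGcov (V ↑x) ?_ y hyx
  rw [List.mem_map]
  exact ⟨x, Finset.mem_toList.mpr hxt, rfl⟩

end Aux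

/-- Corollary (towers with bases in a given set): if `F` is clopen with
`X = F ∪ T(F) ∪ … ∪ T^N(F)`, then for every `n ≥ N` there is a finite partition of `X`
into clopen `T`-towers of height at least `n` whose bases are contained in `F`. -/
theorem stmt_3 {X : Type*} [TopologicalSpace X] [CompactSpace X]
    [TopologicalSpace.MetrizableSpace X] [TotallyDisconnectedSpace X] [PerfectSpace X]
    [Nonempty X]
    (T : X ≃ₜ X) (hT : ∀ (x : X) (m : ℕ), 1 ≤ m → (⇑T)^[m] x ≠ x)
    (F : Set X) (hF : IsClopen F) (N : ℕ)
    (hcov : (⋃ i ∈ Finset.range (N + 1), (⇑T)^[i] '' F) = univ)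
    (n : ℕ) (hn : N ≤ n) :
    ∃ (m : ℕ) (B : Fin m → Set X) (h : Fin m → ℕ),
      (∀ i, IsClopen (B i)) ∧ (∀ i, n ≤ h i) ∧ (∀ i, B i ⊆ F) ∧
      (∀ i j i' j', j < h i → j' < h i' → (i, j) ≠ (i', j') →
        Disjoint ((⇑T)^[j] '' B i) ((⇑T)^[j'] '' B i')) ∧
      (⋃ i, ⋃ j ∈ Finset.range (h i), (⇑T)^[j] '' B i) = univ := by
  classical
  letI : MetricSpace X := TopologicalSpace.metrizableSpaceMetric X
  obtain ⟨G, hGc, hGF, hGd, hGcov⟩ := marker T hT hF n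
  -- every point of X lies in some `T^i F` with `i ≤ N`
  have hx_cov : ∀ x : X, ∃ i ≤ N, ∃ y ∈ F, (⇑T)^[i] y = x := by
    intro x
    have : x ∈ (⋃ i ∈ Finset.range (N + 1), (⇑T)^[i] '' F) := by rw [hcov]; trivial
    obtain ⟨i, hi, y, hy, hyx⟩ := by simpa [Finset.mem_range, Nat.lt_succ_iff] using this
    exact ⟨i, hi, y, hy, hyx⟩
  set K := N + 2 * n with hK
  -- forward visits to G within time K
  have hfwd : ∀ x : X, ∃ j ≤ K, (⇑T)^[j] x ∈ G := by
    intro x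
    obtain ⟨i, hiN, y, hyF, hyx⟩ := hx_cov ((⇑T)^[N + n] x)
    have hyeq : y = (⇑T)^[N + n - i] x := by
      have := congrArg ((⇑T.symm)^[i]) hyx
      rwa [gf_iter, g_f_of_le T (hiN.trans (Nat.le_add_right N n))] at this
    obtain ⟨a, han, ha⟩ := hGcov y hyF
    rcases ha with ha | ha
    · refine ⟨a + (N + n - i), ?_, ?_⟩
      · omega
      · rw [Function.iterate_add_apply, ← hyeq]; exact ha
    · refine ⟨N + n - i - a, ?_, ?_⟩
      · omega
      · rw [hyeq, g_f_of_le T (show a ≤ N + n - i by omega)] at ha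
        exact ha
  -- backward visits to G within time K
  have hbwd : ∀ x : X, ∃ j ≤ K, (⇑T.symm)^[j] x ∈ G := by
    intro x
    obtain ⟨i, hiN, y, hyF, hyx⟩ := hx_cov ((⇑T.symm)^[n] x)
    have hyeq : y = (⇑T.symm)^[i + n] x := by
      have := congrArg ((⇑T.symm)^[i]) hyx
      rwa [gf_iter, ← Function.iterate_add_apply] at this
    obtain ⟨a, han, ha⟩ := hGcov y hyF
    rcases ha with ha | ha
    · refine ⟨i + n - a, ?_, ?_⟩
      · omega
      · rw [hyeq, f_g_of_le T (show a ≤ i + n by omega)] at ha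
        exact ha
    · refine ⟨a + (i + n), ?_, ?_⟩
      · omega
      · rw [hyeq, ← Function.iterate_add_apply] at ha
        exact ha
  -- the towers
  set B : Fin (N + n + 1) → Set X := fun i =>
    {x | x ∈ G ∧ (∀ j, 1 ≤ j → j < n + 1 + (i : ℕ) → (⇑T)^[j] x ∉ G) ∧
      (⇑T)^[n + 1 + (i : ℕ)] x ∈ G} with hBdef
  have hBmem : ∀ (i : Fin (N + n + 1)) (x : X), x ∈ B i ↔
      (x ∈ G ∧ (∀ j, 1 ≤ j → j < n + 1 + (i : ℕ) → (⇑T)^[j] x ∉ G) ∧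
        (⇑T)^[n + 1 + (i : ℕ)] x ∈ G) := fun i x => Iff.rfl
  refine ⟨N + n + 1, B, fun i => n + 1 + (i : ℕ), ?_, ?_, ?_, ?_, ?_⟩
  · -- clopen
    intro i
    have hrepr : B i = (G ∩ ⋂ j ∈ Finset.Ico 1 (n + 1 + (i : ℕ)), ((⇑T)^[j] ⁻¹' G)ᶜ) ∩
        (⇑T)^[n + 1 + (i : ℕ)] ⁻¹' G := by
      ext x
      simp only [hBdef, mem_setOf_eq, mem_inter_iff, mem_iInter, Finset.mem_Ico,
        mem_compl_iff, mem_preimage]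
      tauto
    rw [hrepr]
    exact ((hGc.inter (isClopen_biInter_finset fun j _ =>
      (hGc.preimage (T.continuous.iterate j)).compl)).inter
      (hGc.preimage (T.continuous.iterate _)))
  · -- heights
    intro i
    show n ≤ n + 1 + (i : ℕ)
    omega
  · -- bases in F
    intro i x hx
    exact hGF ((hBmem i x).mp hx).1
  · -- disjointness
    have base_eq : ∀ (i i' : Fin (N + n + 1)) (x : X), x ∈ B i → x ∈ B i' → i = i' := by
      intro i i' x hx hx'
      rw [hBmem] at hx hx'
      rcases lt_trichotomy (i : ℕ) (i' : ℕ) with hlt | heq | hlt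
      · exact absurd hx.2.2 (hx'.2.1 _ (by omega) (by omega))
      · exact Fin.ext heq
      · exact absurd hx'.2.2 (hx.2.1 _ (by omega) (by omega))
    have key : ∀ (i i' : Fin (N + n + 1)) (j j' : ℕ), j' ≤ j → j < n + 1 + (i : ℕ) →
        ∀ x ∈ B i, ∀ x' ∈ B i', (⇑T)^[j] x = (⇑T)^[j'] x' → j = j' ∧ x = x' := by
      intro i i' j j' hj' hj x hx x' hx' he
      have h0 := congrArg ((⇑T.symm)^[j']) he
      rw [gf_iter, g_f_of_le T hj'] at h0
      rcases Nat.eq_zero_or_pos (j - j') with hz | hpos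
      · have hjj : j = j' := by omega
        refine ⟨hjj, ?_⟩
        rw [hz] at h0
        simpa using h0
      · exfalso
        have : (⇑T)^[j - j'] x ∈ G := h0.symm ▸ ((hBmem i' x').mp hx').1
        exact ((hBmem i x).mp hx).2.1 (j - j') hpos (by omega) this
    intro i j i' j' hj hj' hne
    rw [Set.disjoint_left]
    rintro u ⟨x, hx, rfl⟩ ⟨x', hx', he⟩
    rcases le_total j' j with hle | hle
    · obtain ⟨hjj, hxx⟩ := key i i' j j' hle hj x hx x' hx' he.symm
      have hii : i = i' := base_eq i i' x hx (hxx.symm ▸ hx')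
      exact hne (by rw [hii, hjj])
    · obtain ⟨hjj, hxx⟩ := key i' i j' j hle hj' x' hx' x hx he
      have hii : i = i' := base_eq i i' x hx (hxx ▸ hx')
      exact hne (by rw [hii, ← hjj])
  · -- coverage
    ext x
    simp only [mem_iUnion, Finset.mem_range, mem_univ, iff_true]
    obtain ⟨j0, _, hj0⟩ := hbwd x
    have hPex : ∃ s, (⇑T.symm)^[s] x ∈ G := ⟨j0, hj0⟩
    set s := Nat.find hPex with hs_def
    have hs : (⇑T.symm)^[s] x ∈ G := Nat.find_spec hPex
    set y := (⇑T.symm)^[s] x with hy_def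
    obtain ⟨j1, hj1K, hj1⟩ := hfwd (T y)
    have hQex : ∃ k, 1 ≤ k ∧ (⇑T)^[k] y ∈ G :=
      ⟨j1 + 1, by omega, by rwa [Function.iterate_succ_apply]⟩
    set k := Nat.find hQex with hk_def
    obtain ⟨hk1, hkG⟩ : 1 ≤ k ∧ (⇑T)^[k] y ∈ G := Nat.find_spec hQex
    have hQ1 : 1 ≤ j1 + 1 ∧ (⇑T)^[j1 + 1] y ∈ G :=
      ⟨by omega, by rwa [Function.iterate_succ_apply]⟩
    have hkub : k ≤ K + 1 := le_trans (Nat.find_min' hQex hQ1) (by omega)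
    have hklb : n + 1 ≤ k := by
      by_contra hcon
      exact hGd y hs k hk1 (by omega) hkG
    have hsk : s < k := by
      by_contra hcon
      push_neg at hcon
      have hs1 : 1 ≤ s := le_trans hk1 hcon
      have hmem : (⇑T.symm)^[s - k] x ∈ G := by
        have h2 := hkG
        rw [hy_def, f_g_of_le T hcon] at h2
        exact h2
      exact Nat.find_min hPex (show s - k < s by omega) hmem
    obtain ⟨iv, hiv⟩ : ∃ iv : Fin (N + n + 1), (iv : ℕ) = k - (n + 1) :=
      ⟨⟨k - (n + 1), by omega⟩, rfl⟩
    refine ⟨iv, s, ?_, y, ?_, fg_iter T s x⟩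
    · show s < n + 1 + (iv : ℕ)
      omega
    · rw [hBmem]
      refine ⟨hs, ?_, ?_⟩
      · intro j hj1' hjlt hjG
        exact Nat.find_min hQex (show j < k by omega) ⟨hj1', hjG⟩
      · have hk2 : n + 1 + (iv : ℕ) = k := by omega
        rw [hk2]
        exact hkG
end

section
/- Let X be a Cantor set, T an aperiodic homeomorphism of X, μ_1, ..., μ_k Borel probability measures on X, n ≥ 2, and ε > 0. Then there exists a clopen partition of X into finitely many T-towers ξ_1, ..., ξ_q with bases B_1, ..., B_q and heights h_1, ..., h_q, such that h_s ≥ n for all s, and μ_i( ⋃_{s=1}^{q} ⋃_{j=0}^{h_s − n} T^j(B_s) ) > 1 − ε for every i = 1, ..., k. -/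
open Set Function MeasureTheory

namespace Stmt5Aux

variable {X : Type*} [TopologicalSpace X]

lemma linv (T : X ≃ₜ X) (m : ℕ) (x : X) : (⇑T.symm)^[m] ((⇑T)^[m] x) = x :=
  (Function.LeftInverse.iterate T.symm_apply_apply m) x

lemma rinv (T : X ≃ₜ X) (m : ℕ) (x : X) : (⇑T)^[m] ((⇑T.symm)^[m] x) = x :=
  (Function.LeftInverse.iterate T.apply_symm_apply m) x

lemma image_iterate_eq (T : X ≃ₜ X) (m : ℕ) (S : Set X) :
    (⇑T)^[m] '' S = (⇑T.symm)^[m] ⁻¹' S := by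
  ext x
  constructor
  · rintro ⟨y, hy, rfl⟩; rwa [Set.mem_preimage, linv]
  · intro hx; exact ⟨_, hx, rinv T m x⟩

lemma image_iterate_add (T : X ≃ₜ X) (a b : ℕ) (S : Set X) :
    (⇑T)^[a + b] '' S = (⇑T)^[a] '' ((⇑T)^[b] '' S) := by
  rw [Function.iterate_add, Set.image_comp]

lemma f_finv (T : X ≃ₜ X) {a b : ℕ} (h : a ≤ b) (x : X) :
    (⇑T)^[a] ((⇑T.symm)^[b] x) = (⇑T.symm)^[b - a] x := by
  have hb : b = a + (b - a) := by omega
  rw [hb, Function.iterate_add_apply, rinv]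
  congr 1; omega

lemma finv_f (T : X ≃ₜ X) {a b : ℕ} (h : a ≤ b) (x : X) :
    (⇑T.symm)^[a] ((⇑T)^[b] x) = (⇑T)^[b - a] x := by
  have hb : b = a + (b - a) := by omega
  rw [hb, Function.iterate_add_apply, linv]
  congr 1; omega

variable [CompactSpace X] [TopologicalSpace.MetrizableSpace X] [TotallyDisconnectedSpace X]

/-- Local marker sets: clopen neighborhoods disjoint from their first `N-1` iterates. -/
lemma local_marker (T : X ≃ₜ X) (hT : ∀ (x : X) (m : ℕ), 1 ≤ m → (⇑T)^[m] x ≠ x)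
    (N : ℕ) (x : X) :
    ∃ U : Set X, IsClopen U ∧ x ∈ U ∧
      ∀ i, 0 < i → i < N → Disjoint U ((⇑T)^[i] '' U) := by
  have hsep : ∀ i : ℕ, ∃ W : Set X, IsOpen W ∧ x ∈ W ∧
      (0 < i → Disjoint W ((⇑T)^[i] '' W)) := by
    intro i
    by_cases hi : 0 < i
    · obtain ⟨u, v, hu, hv, hxu, hxv, huv⟩ := t2_separation (Ne.symm (hT x i hi))
      refine ⟨u ∩ (⇑T)^[i] ⁻¹' v, hu.inter (hv.preimage (T.continuous.iterate i)),
        ⟨hxu, hxv⟩, fun _ => ?_⟩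
      refine huv.mono inter_subset_left ?_
      exact (Set.image_mono inter_subset_right).trans (Set.image_preimage_subset _ _)
    · exact ⟨univ, isOpen_univ, mem_univ x, fun h => absurd h hi⟩
  choose W hWo hWx hWd using hsep
  have hWb : IsOpen (⋂ i ∈ Finset.range N, W i) :=
    isOpen_biInter_finset fun i _ => hWo i
  have hxb : x ∈ ⋂ i ∈ Finset.range N, W i := by
    simp only [Set.mem_iInter]; exact fun i _ => hWx i
  obtain ⟨U, hU, hxU, hUsub⟩ := compact_exists_isClopen_in_isOpen hWb hxb
  refine ⟨U, hU, hxU, fun i hi0 hiN => ?_⟩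
  have h1 : U ⊆ W i := by
    refine hUsub.trans ?_
    exact Set.biInter_subset_of_mem (Finset.mem_range.mpr hiN)
  exact (hWd i hi0).mono h1 (Set.image_mono h1)

/-- Global marker: a clopen set disjoint from its first `N-1` iterates whose
iterates within distance `N` (forward or backward) cover `X`. -/
lemma marker (T : X ≃ₜ X) (hT : ∀ (x : X) (m : ℕ), 1 ≤ m → (⇑T)^[m] x ≠ x)
    (N : ℕ) (hN : 1 ≤ N) :
    ∃ A : Set X, IsClopen A ∧ (∀ i, 0 < i → i < N → Disjoint A ((⇑T)^[i] '' A)) ∧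
      ∀ x : X, ∃ m, m < N ∧ ((⇑T)^[m] x ∈ A ∨ (⇑T.symm)^[m] x ∈ A) := by
  classical
  choose U hUc hUx hUd using local_marker T hT N
  obtain ⟨t, ht⟩ := IsCompact.elim_finite_subcover isCompact_univ U
    (fun x => (hUc x).isOpen) (fun x _ => Set.mem_iUnion.mpr ⟨x, hUx x⟩)
  have main : ∀ t : Finset X, ∃ A : Set X, IsClopen A ∧
      (∀ i, 0 < i → i < N → Disjoint A ((⇑T)^[i] '' A)) ∧
      ∀ y ∈ ⋃ x ∈ t, U x, ∃ m, m < N ∧ ((⇑T)^[m] y ∈ A ∨ (⇑T.symm)^[m] y ∈ A) := by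
    intro t
    induction t using Finset.induction_on with
    | empty => exact ⟨∅, isClopen_empty, fun i _ _ => by simp, by simp⟩
    | insert _ _ hat ih =>
      rename_i a t
      obtain ⟨A, hAc, hAd, hAcov⟩ := ih
      set D : Set X := ⋃ m ∈ Finset.range N, ((⇑T)^[m] ⁻¹' A ∪ (⇑T.symm)^[m] ⁻¹' A)
        with hD
      have hDc : IsClopen D := by
        refine isClopen_biUnion_finset fun m _ => ?_
        exact (hAc.preimage (T.continuous.iterate m)).union
          (hAc.preimage (T.symm.continuous.iterate m))
      have hDmem : ∀ y : X, y ∈ D ↔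
          ∃ m, m < N ∧ ((⇑T)^[m] y ∈ A ∨ (⇑T.symm)^[m] y ∈ A) := by
        intro y
        simp [hD, Set.mem_iUnion, Finset.mem_range, and_assoc]
      set C : Set X := U a \ D with hC
      refine ⟨A ∪ C, hAc.union ((hUc a).diff hDc), ?_, ?_⟩
      · intro i hi0 hiN
        rw [Set.image_union, Set.disjoint_union_left, Set.disjoint_union_right,
          Set.disjoint_union_right]
        refine ⟨⟨hAd i hi0 hiN, ?_⟩, ?_, ?_⟩
        · -- Disjoint A (f^i '' C)
          rw [Set.disjoint_left]
          rintro z hzA ⟨c, hc, rfl⟩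
          exact hc.2 ((hDmem c).mpr ⟨i, hiN, Or.inl hzA⟩)
        · -- Disjoint C (f^i '' A)
          rw [Set.disjoint_left]
          rintro z hzC ⟨a', ha', rfl⟩
          have : (⇑T.symm)^[i] ((⇑T)^[i] a') ∈ A := by rw [linv]; exact ha'
          exact hzC.2 ((hDmem _).mpr ⟨i, hiN, Or.inr this⟩)
        · exact (hUd a i hi0 hiN).mono diff_subset (Set.image_mono diff_subset)
      · intro y hy
        simp only [Set.mem_iUnion, Finset.mem_insert, exists_prop] at hy
        obtain ⟨x, hx, hyU⟩ := hy
        rcases hx with rfl | hx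
        · by_cases hyD : y ∈ D
          · obtain ⟨m, hm, hmem⟩ := (hDmem y).mp hyD
            refine ⟨m, hm, ?_⟩
            rcases hmem with h | h
            · exact Or.inl (Set.mem_union_left _ h)
            · exact Or.inr (Set.mem_union_left _ h)
          · refine ⟨0, hN, Or.inl ?_⟩
            exact Set.mem_union_right _ ⟨hyU, hyD⟩
        · obtain ⟨m, hm, hmem⟩ := hAcov y (Set.mem_iUnion₂.mpr ⟨x, hx, hyU⟩)
          refine ⟨m, hm, ?_⟩
          rcases hmem with h | h
          · exact Or.inl (Set.mem_union_left _ h)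
          · exact Or.inr (Set.mem_union_left _ h)
  obtain ⟨A, hAc, hAd, hAcov⟩ := main t
  exact ⟨A, hAc, hAd, fun x => hAcov x (ht (mem_univ x))⟩

end Stmt5Aux



/-- Corollary 1: for an aperiodic homeomorphism `T` of a Cantor set, Borel probability
measures `μ_1, …, μ_k`, `n ≥ 2` and `ε > 0`, there is a clopen partition of `X` into
finitely many `T`-towers with bases `B_s` and heights `h_s ≥ n` such that
`μ_i(⋃_s ⋃_{j=0}^{h_s-n} T^j(B_s)) > 1 - ε` for every `i`. -/
theorem stmt_5 {X : Type*} [TopologicalSpace X] [CompactSpace X]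
    [TopologicalSpace.MetrizableSpace X] [TotallyDisconnectedSpace X] [PerfectSpace X]
    [Nonempty X] [MeasurableSpace X] [BorelSpace X]
    (T : X ≃ₜ X) (hT : ∀ (x : X) (m : ℕ), 1 ≤ m → (⇑T)^[m] x ≠ x)
    (k : ℕ) (μ : Fin k → Measure X) (hμ : ∀ i, IsProbabilityMeasure (μ i))
    (n : ℕ) (hn : 2 ≤ n) (ε : ℝ) (hε : 0 < ε) :
    ∃ (q : ℕ) (B : Fin q → Set X) (h : Fin q → ℕ),
      (∀ s, IsClopen (B s)) ∧ (∀ s, n ≤ h s) ∧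
      (∀ s j s' j', j < h s → j' < h s' → (s, j) ≠ (s', j') →
        Disjoint ((⇑T)^[j] '' B s) ((⇑T)^[j'] '' B s')) ∧
      (⋃ s, ⋃ j ∈ Finset.range (h s), (⇑T)^[j] '' B s) = univ ∧
      ∀ i, 1 - ENNReal.ofReal ε <
        μ i (⋃ s, ⋃ j ∈ Finset.range (h s - n + 1), (⇑T)^[j] '' B s) := by
  classical
  open Stmt5Aux in
  -- choose δ and N
  set δ := min ε 1 with hδdef
  have hδ0 : 0 < δ := lt_min hε one_pos
  obtain ⟨N₀, hN₀⟩ := exists_nat_gt ((k * (n - 1) + 1 : ℝ) / δ)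
  set N := max n N₀ with hNdef
  have hnN : n ≤ N := le_max_left _ _
  have hN1 : 1 ≤ N := le_trans (by omega) hnN
  have hNreal : (k * (n - 1) + 1 : ℝ) < δ * N := by
    have h1 : (k * (n - 1) + 1 : ℝ) / δ < (N : ℝ) :=
      lt_of_lt_of_le hN₀ (by exact_mod_cast le_max_right n N₀)
    have := (div_lt_iff₀ hδ0).mp h1
    linarith [this]
  obtain ⟨A₀, hA₀c, hA₀d, hA₀cov⟩ := Stmt5Aux.marker T hT N hN1
  -- pigeonhole to shift the marker set
  set V : ℕ → Set X := fun j => (⇑T)^[j] '' A₀ with hV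
  have hVdisj : ∀ j j', j < N → j' < N → j ≠ j' → Disjoint (V j) (V j') := by
    have key : ∀ j j', j < j' → j' < N → Disjoint (V j) (V j') := by
      intro j j' hlt hj'
      have hrw : V j' = (⇑T)^[j] '' ((⇑T)^[j' - j] '' A₀) := by
        rw [hV]
        simp only []
        rw [← Stmt5Aux.image_iterate_add]
        have hix : j + (j' - j) = j' := by omega
        rw [hix]
      rw [hrw, hV]
      simp only []
      rw [Set.disjoint_image_iff (T.injective.iterate j)]
      exact hA₀d (j' - j) (by omega) (by omega)
    intro j j' hj hj' hne
    rcases lt_or_gt_of_ne hne with hc | hc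
    · exact key _ _ hc hj'
    · exact (key _ _ hc hj).symm
  have hVmeas : ∀ j, MeasurableSet (V j) := by
    intro j
    rw [hV]
    simp only []
    rw [Stmt5Aux.image_iterate_eq]
    exact (hA₀c.preimage (T.symm.continuous.iterate j)).2.measurableSet
  set c : ℕ → ENNReal := fun jj =>
    ∑ i : Fin k, ∑ l ∈ Finset.Icc 1 (n - 1), μ i ((⇑T)^[l] ⁻¹' (V jj)) with hc
  have hcsum : ∑ jj ∈ Finset.range N, c jj ≤ ((k * (n - 1) : ℕ) : ENNReal) := by
    rw [hc]
    rw [Finset.sum_comm]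
    have hbd : ∀ i : Fin k, ∑ jj ∈ Finset.range N, ∑ l ∈ Finset.Icc 1 (n - 1),
        μ i ((⇑T)^[l] ⁻¹' (V jj)) ≤ ((n - 1 : ℕ) : ENNReal) := by
      intro i
      rw [Finset.sum_comm]
      have hin : ∀ l ∈ Finset.Icc 1 (n-1), ∑ jj ∈ Finset.range N,
          μ i ((⇑T)^[l] ⁻¹' (V jj)) ≤ 1 := by
        intro l _
        have := measure_biUnion_finset (μ := μ i)
          (s := Finset.range N) (f := fun jj => (⇑T)^[l] ⁻¹' (V jj))
          (by
            intro a ha b hb hab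
            exact Disjoint.preimage _ (hVdisj a b (Finset.mem_range.mp ha)
              (Finset.mem_range.mp hb) hab))
          (fun b _ => (hVmeas b).preimage (T.continuous.iterate l).measurable)
        rw [← this]
        haveI := hμ i
        exact prob_le_one
      calc ∑ l ∈ Finset.Icc 1 (n-1), ∑ jj ∈ Finset.range N, μ i ((⇑T)^[l] ⁻¹' (V jj))
          ≤ ∑ l ∈ Finset.Icc 1 (n-1), 1 := Finset.sum_le_sum hin
        _ = ((n - 1 : ℕ) : ENNReal) := by
            rw [Finset.sum_const, Nat.card_Icc]
            simp
    calc ∑ i : Fin k, ∑ jj ∈ Finset.range N, ∑ l ∈ Finset.Icc 1 (n - 1),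
          μ i ((⇑T)^[l] ⁻¹' (V jj))
        ≤ ∑ _i : Fin k, ((n - 1 : ℕ) : ENNReal) := Finset.sum_le_sum fun i _ => hbd i
      _ = ((k * (n - 1) : ℕ) : ENNReal) := by
          rw [Finset.sum_const, Finset.card_univ, Fintype.card_fin]
          push_cast
          ring
  have hpig : ∃ j₀, j₀ < N ∧ c j₀ < ENNReal.ofReal δ := by
    by_contra hcon
    push_neg at hcon
    have h1 : (N : ENNReal) * ENNReal.ofReal δ ≤ ∑ jj ∈ Finset.range N, c jj := by
      calc (N : ENNReal) * ENNReal.ofReal δ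
          = ∑ _jj ∈ Finset.range N, ENNReal.ofReal δ := by
            rw [Finset.sum_const, Finset.card_range, nsmul_eq_mul]
        _ ≤ ∑ jj ∈ Finset.range N, c jj :=
            Finset.sum_le_sum fun j hj => hcon j (Finset.mem_range.mp hj)
    have h2 : ((k * (n - 1) : ℕ) : ENNReal) < (N : ENNReal) * ENNReal.ofReal δ := by
      have hr : ((k * (n - 1) : ℕ) : ℝ) < δ * N := by
        push_cast [Nat.cast_sub (show 1 ≤ n by omega)]
        linarith [hNreal]
      calc ((k * (n - 1) : ℕ) : ENNReal)
          = ENNReal.ofReal ((k * (n - 1) : ℕ) : ℝ) := (ENNReal.ofReal_natCast _).symm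
        _ < ENNReal.ofReal (δ * N) := by
            rw [ENNReal.ofReal_lt_ofReal_iff (by positivity)]
            exact hr
        _ = (N : ENNReal) * ENNReal.ofReal δ := by
            rw [ENNReal.ofReal_mul hδ0.le, ENNReal.ofReal_natCast, mul_comm]
    exact absurd (h1.trans hcsum) h2.not_ge
  obtain ⟨j₀, hj₀N, hj₀⟩ := hpig
  set A : Set X := (⇑T)^[j₀] '' A₀ with hA
  have hAc : IsClopen A := by
    rw [hA, Stmt5Aux.image_iterate_eq]
    exact hA₀c.preimage (T.symm.continuous.iterate j₀)
  have hAd : ∀ i, 0 < i → i < N → Disjoint A ((⇑T)^[i] '' A) := by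
    intro i h0 hiN
    have hrw : (⇑T)^[i] '' A = (⇑T)^[j₀] '' ((⇑T)^[i] '' A₀) := by
      rw [hA, ← Stmt5Aux.image_iterate_add, ← Stmt5Aux.image_iterate_add, add_comm i j₀]
    rw [hrw, hA, Set.disjoint_image_iff (T.injective.iterate j₀)]
    exact hA₀d i h0 hiN
  -- membership helpers for A
  have hmemA : ∀ (m : ℕ) (x : X), (⇑T.symm)^[m] x ∈ A ↔ (⇑T.symm)^[j₀ + m] x ∈ A₀ := by
    intro m x
    rw [hA, Stmt5Aux.image_iterate_eq, Set.mem_preimage, ← Function.iterate_add_apply]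
  have hback : ∀ x : X, ∃ m, m ≤ 2 * N ∧ (⇑T.symm)^[m] x ∈ A := by
    intro x
    obtain ⟨p, hpN, hp⟩ := hA₀cov ((⇑T.symm)^[N + j₀] x)
    rcases hp with h | h
    · rw [Stmt5Aux.f_finv T (by omega)] at h
      refine ⟨N - p, by omega, ?_⟩
      rw [hmemA]
      have he : j₀ + (N - p) = N + j₀ - p := by omega
      rw [he]
      exact h
    · rw [← Function.iterate_add_apply] at h
      refine ⟨p + N, by omega, ?_⟩
      rw [hmemA]
      have he : j₀ + (p + N) = p + (N + j₀) := by omega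
      rw [he]
      exact h
  have hup : ∀ (t : ℕ) (x : X), (⇑T)^[t] x ∈ A₀ → (⇑T)^[j₀ + t] x ∈ A := by
    intro t x hx
    rw [hA, Stmt5Aux.image_iterate_eq, Set.mem_preimage, Function.iterate_add_apply,
      Stmt5Aux.linv]
    exact hx
  have hfwd : ∀ x : X, ∃ m, 0 < m ∧ m ≤ 3 * N ∧ (⇑T)^[m] x ∈ A := by
    intro x
    obtain ⟨p, hpN, hp⟩ := hA₀cov ((⇑T)^[N] x)
    rcases hp with h | h
    · rw [← Function.iterate_add_apply] at h
      exact ⟨j₀ + (p + N), by omega, by omega, hup _ _ h⟩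
    · rw [Stmt5Aux.finv_f T (by omega)] at h
      exact ⟨j₀ + (N - p), by omega, by omega, hup _ _ h⟩
  -- smallness of A for each measure
  have hSi : ∀ i, ∑ l ∈ Finset.Icc 1 (n - 1), μ i ((⇑T)^[l] ⁻¹' A) < ENNReal.ofReal δ := by
    intro i
    refine lt_of_le_of_lt ?_ hj₀
    rw [hc]
    have : A = V j₀ := by rw [hA, hV]
    rw [this]
    exact Finset.single_le_sum (f := fun i => ∑ l ∈ Finset.Icc 1 (n - 1),
      μ i ((⇑T)^[l] ⁻¹' (V j₀))) (fun _ _ => zero_le) (Finset.mem_univ i)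
  -- the towers
  set q := 3 * N + 1 with hq
  set B : Fin q → Set X := fun s =>
    {x | x ∈ A ∧ 0 < s.val ∧ (⇑T)^[s.val] x ∈ A ∧
      ∀ m, 0 < m → m < s.val → (⇑T)^[m] x ∉ A} with hB
  set h : Fin q → ℕ := fun s => max s.val n with hh
  have hBlow : ∀ (s : Fin q) (x : X), x ∈ B s → N ≤ s.val := by
    intro s x hx
    obtain ⟨hxA, hpos, hret, _⟩ := hx
    by_contra hcon
    push_neg at hcon
    exact Set.disjoint_left.mp (hAd s.val hpos hcon) hret (Set.mem_image_of_mem _ hxA)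
  have hhs : ∀ (s : Fin q) (x : X), x ∈ B s → h s = s.val := by
    intro s x hx
    exact max_eq_left (le_trans hnN (hBlow s x hx))
  -- covering
  have hcover : ∀ x : X, ∃ (s : Fin q) (j : ℕ), j < h s ∧ ∃ b ∈ B s, (⇑T)^[j] b = x := by
    intro x
    have hex : ∃ m, (⇑T.symm)^[m] x ∈ A := by
      obtain ⟨m, _, hm⟩ := hback x
      exact ⟨m, hm⟩
    set m₀ := Nat.find hex with hm₀
    have ha : (⇑T.symm)^[m₀] x ∈ A := Nat.find_spec hex
    set a := (⇑T.symm)^[m₀] x with hadef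
    have hret : ∃ m, 0 < m ∧ (⇑T)^[m] a ∈ A := by
      obtain ⟨m, h0, _, hm⟩ := hfwd a
      exact ⟨m, h0, hm⟩
    set t := Nat.find hret with ht
    obtain ⟨ht0, htA⟩ := Nat.find_spec hret
    have htq : t < q := by
      obtain ⟨m, h0, hle, hm⟩ := hfwd a
      have : t ≤ m := Nat.find_min' hret ⟨h0, hm⟩
      omega
    have hm₀t : m₀ < t := by
      by_contra hcon
      push_neg at hcon
      have heq : (⇑T)^[t] a = (⇑T.symm)^[m₀ - t] x := by
        rw [hadef, Stmt5Aux.f_finv T hcon]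
      have : (⇑T.symm)^[m₀ - t] x ∈ A := heq ▸ htA
      exact Nat.find_min hex (by omega) this
    refine ⟨⟨t, htq⟩, m₀, ?_, a, ?_, ?_⟩
    · have : t ≤ h ⟨t, htq⟩ := le_max_left _ _
      omega
    · refine ⟨ha, ht0, htA, fun m hm0 hmt => ?_⟩
      intro hmem
      exact Nat.find_min hret hmt ⟨hm0, hmem⟩
    · rw [hadef, Stmt5Aux.rinv]
  refine ⟨q, B, h, ?_, fun s => le_max_right _ _, ?_, ?_, ?_⟩
  · -- clopen
    intro s
    by_cases h0 : 0 < s.val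
    · have hrw : B s = A ∩ ((⇑T)^[s.val] ⁻¹' A) ∩
          ⋂ m ∈ Finset.Ico 1 s.val, ((⇑T)^[m] ⁻¹' A)ᶜ := by
        ext x
        simp only [hB, Set.mem_setOf_eq, Set.mem_inter_iff, Set.mem_iInter,
          Finset.mem_Ico, Set.mem_compl_iff, Set.mem_preimage]
        constructor
        · rintro ⟨h1, _, h3, h4⟩
          exact ⟨⟨h1, h3⟩, fun m hm => h4 m (by omega) hm.2⟩
        · rintro ⟨⟨h1, h3⟩, h4⟩
          exact ⟨h1, h0, h3, fun m hm1 hm2 => h4 m ⟨by omega, hm2⟩⟩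
      rw [hrw]
      refine ((hAc.inter (hAc.preimage (T.continuous.iterate _))).inter
        (isClopen_biInter_finset fun m _ => (hAc.preimage (T.continuous.iterate m)).compl))
    · have hrw : B s = ∅ := by
        ext x
        simp only [hB, Set.mem_setOf_eq, Set.mem_empty_iff_false, iff_false]
        rintro ⟨_, hpos, _⟩
        omega
      rw [hrw]
      exact isClopen_empty
  · -- disjointness
    have key : ∀ (s s' : Fin q) (j j' : ℕ), j < h s → j' ≤ j →
        ∀ b ∈ B s, ∀ b' ∈ B s', (⇑T)^[j'] b' = (⇑T)^[j] b → s = s' ∧ j = j' := by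
      intro s s' j j' hj hle b hb b' hb' heq
      have hhsv : h s = s.val := hhs s b hb
      have hbb' : b' = (⇑T)^[j - j'] b := by
        apply (T.injective.iterate j')
        rw [heq, ← Function.iterate_add_apply]
        congr 1
        omega
      rcases Nat.eq_or_lt_of_le (Nat.zero_le (j - j')) with hd | hd
      · -- j = j'
        have hj'' : j = j' := by omega
        have hbb : b' = b := by rw [hbb', ← hd, Function.iterate_zero_apply]
        obtain ⟨h1, h2, h3, h4⟩ := hb
        obtain ⟨h1', h2', h3', h4'⟩ := hb'
        rw [hbb] at h3' h4'
        have hsv : s.val = s'.val := by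
          by_contra hne
          rcases Nat.lt_or_ge s.val s'.val with hc | hc
          · exact h4' s.val h2 hc h3
          · have hc' : s'.val < s.val := by omega
            exact h4 s'.val h2' hc' h3'
        exact ⟨Fin.ext hsv, hj''⟩
      · -- 0 < j - j' : contradiction
        exfalso
        obtain ⟨h1, h2, h3, h4⟩ := hb
        have hlt : j - j' < s.val := by omega
        exact h4 (j - j') (by omega) hlt (by rw [← hbb']; exact hb'.1)
    intro s j s' j' hj hj' hne
    rw [Set.disjoint_left]
    rintro x ⟨b, hb, rfl⟩ ⟨b', hb', heq⟩
    rcases le_or_gt j' j with hc | hc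
    · obtain ⟨hs, hjj⟩ := key s s' j j' hj hc b hb b' hb' heq
      exact hne (by rw [hs, hjj])
    · obtain ⟨hs, hjj⟩ := key s' s j' j hj' hc.le b' hb' b hb heq.symm
      exact hne (by rw [hs, hjj])
  · -- covering equality
    rw [Set.eq_univ_iff_forall]
    intro x
    obtain ⟨s, j, hjh, b, hbB, hbe⟩ := hcover x
    simp only [Set.mem_iUnion, Finset.mem_range]
    exact ⟨s, j, hjh, b, hbB, hbe⟩
  · -- measure estimate
    intro i
    haveI := hμ i
    set Kset := ⋃ s, ⋃ j ∈ Finset.range (h s - n + 1), (⇑T)^[j] '' B s with hK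
    set E := ⋃ l ∈ Finset.Icc 1 (n - 1), (⇑T)^[l] ⁻¹' A with hE
    have hcompl : ∀ x : X, x ∉ Kset → x ∈ E := by
      intro x hx
      obtain ⟨s, j, hjh, b, hbB, hbe⟩ := hcover x
      have hhsv : h s = s.val := hhs s b hbB
      have hns : n ≤ s.val := le_trans hnN (hBlow s b hbB)
      by_cases hjs : j < h s - n + 1
      · exfalso
        apply hx
        rw [hK]
        simp only [Set.mem_iUnion, Finset.mem_range]
        exact ⟨s, j, hjs, b, hbB, hbe⟩
      · push_neg at hjs
        have hl1 : 1 ≤ s.val - j := by omega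
        have hl2 : s.val - j ≤ n - 1 := by omega
        rw [hE]
        simp only [Set.mem_iUnion, Finset.mem_Icc, Set.mem_preimage]
        refine ⟨s.val - j, ⟨hl1, hl2⟩, ?_⟩
        rw [← hbe, ← Function.iterate_add_apply]
        have he : s.val - j + j = s.val := by omega
        rw [he]
        exact hbB.2.2.1
    have h1 : (1 : ENNReal) ≤ μ i Kset + μ i E := by
      have huniv : (univ : Set X) ⊆ Kset ∪ E := by
        intro x _
        by_cases hx : x ∈ Kset
        · exact Or.inl hx
        · exact Or.inr (hcompl x hx)
      calc (1 : ENNReal) = μ i univ := measure_univ.symm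
        _ ≤ μ i (Kset ∪ E) := measure_mono huniv
        _ ≤ μ i Kset + μ i E := measure_union_le _ _
    have hEsmall : μ i E < ENNReal.ofReal δ := by
      refine lt_of_le_of_lt ?_ (hSi i)
      rw [hE]
      exact measure_biUnion_finset_le _ _
    have hδε : ENNReal.ofReal δ ≤ ENNReal.ofReal ε :=
      ENNReal.ofReal_le_ofReal (min_le_left _ _)
    have hδ1 : ENNReal.ofReal δ ≤ 1 := by
      rw [← ENNReal.ofReal_one]
      exact ENNReal.ofReal_le_ofReal (min_le_right _ _)
    calc 1 - ENNReal.ofReal ε ≤ 1 - ENNReal.ofReal δ := tsub_le_tsub_left hδε 1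
      _ < μ i Kset := by
          apply ENNReal.sub_lt_of_lt_add hδ1
          calc (1 : ENNReal) ≤ μ i Kset + μ i E := h1
            _ < μ i Kset + ENNReal.ofReal δ :=
                ENNReal.add_lt_add_left (measure_ne_top _ _) hEsmall
end

section
/- Let X be a Cantor set, T an aperiodic homeomorphism of X, μ_1, ..., μ_k Borel probability measures on X, and ε > 0. Then there exists a clopen set A ⊆ X such that ⋃_{j ≥ 0} T^j(A) = X and μ_i(A) < ε for all i = 1, ..., k. -/
open Set Function MeasureTheory
open scoped ENNReal

namespace Stmt6Aux

variable {X : Type*} [TopologicalSpace X] (T : X ≃ₜ X)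

lemma iterLI (m : ℕ) : Function.LeftInverse (⇑T.symm)^[m] (⇑T)^[m] :=
  Function.LeftInverse.iterate T.symm_apply_apply m

lemma iterRI (m : ℕ) : Function.RightInverse (⇑T.symm)^[m] (⇑T)^[m] :=
  Function.LeftInverse.iterate T.apply_symm_apply m

lemma iterImage_isClopen (m : ℕ) {A : Set X} (h : IsClopen A) :
    IsClopen ((⇑T)^[m] '' A) := by
  rw [Set.image_eq_preimage_of_inverse (iterLI T m) (iterRI T m)]
  exact h.preimage (T.symm.continuous.iterate m)

lemma symmIterImage_isClopen (m : ℕ) {A : Set X} (h : IsClopen A) :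
    IsClopen ((⇑T.symm)^[m] '' A) := by
  rw [Set.image_eq_preimage_of_inverse (iterRI T m) (iterLI T m)]
  exact h.preimage (T.continuous.iterate m)

/-- The union of the two-sided translates of `A` within distance `< N`. -/
def spread (N : ℕ) (A : Set X) : Set X :=
  ⋃ m ∈ Finset.range N, ((⇑T)^[m] '' A ∪ (⇑T.symm)^[m] '' A)

lemma spread_mono (N : ℕ) {A B : Set X} (h : A ⊆ B) : spread T N A ⊆ spread T N B :=
  Set.iUnion₂_mono fun m _ =>
    Set.union_subset_union (Set.image_mono h) (Set.image_mono h)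

/-- Recursive marker construction (Krieger-type disjointification). -/
def mark (N : ℕ) : List (Set X) → Set X
  | [] => ∅
  | U :: l => mark N l ∪ (U \ spread T N (mark N l))

lemma mark_isClopen (N : ℕ) (l : List (Set X)) (hl : ∀ U ∈ l, IsClopen U) :
    IsClopen (mark T N l) := by
  induction l with
  | nil => exact isClopen_empty
  | cons U l ih =>
    have hA := ih fun V hV => hl V (List.mem_cons_of_mem _ hV)
    refine hA.union (((hl U List.mem_cons_self).diff ?_))
    exact isClopen_biUnion_finset fun m _ =>
      (iterImage_isClopen T m hA).union (symmIterImage_isClopen T m hA)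

lemma mark_disjoint (N : ℕ) (l : List (Set X))
    (hl : ∀ U ∈ l, ∀ m, 1 ≤ m → m < N → Disjoint U ((⇑T)^[m] '' U)) :
    ∀ m, 1 ≤ m → m < N → Disjoint (mark T N l) ((⇑T)^[m] '' mark T N l) := by
  induction l with
  | nil => intro m _ _; simp [mark]
  | cons U l ih =>
    intro m hm1 hmN
    have hA := ih (fun V hV => hl V (List.mem_cons_of_mem _ hV)) m hm1 hmN
    set A := mark T N l with hAdef
    set B := U \ spread T N A with hBdef
    have hBU : B ⊆ U := Set.diff_subset
    have hmem : m ∈ Finset.range N := Finset.mem_range.2 hmN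
    have hBS : Disjoint B (spread T N A) := Set.disjoint_sdiff_left
    rw [show mark T N (U :: l) = A ∪ B from rfl, Set.image_union]
    rw [Set.disjoint_union_left, Set.disjoint_union_right, Set.disjoint_union_right]
    refine ⟨⟨hA, ?_⟩, ?_, ?_⟩
    · rw [Set.disjoint_right]
      rintro x ⟨b, hb, rfl⟩ hx
      have : b ∈ spread T N A :=
        Set.mem_biUnion hmem (Or.inr ⟨(⇑T)^[m] b, hx, iterLI T m b⟩)
      exact hBS.le_bot ⟨hb, this⟩
    · exact hBS.mono_right fun x hx => Set.mem_biUnion hmem (Or.inl hx)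
    · exact (hl U List.mem_cons_self m hm1 hmN).mono hBU (Set.image_mono hBU)

lemma mark_cover (N : ℕ) (hN : 1 ≤ N) (l : List (Set X)) :
    ∀ U ∈ l, U ⊆ spread T N (mark T N l) := by
  induction l with
  | nil => simp
  | cons V l ih =>
    intro U hU x hx
    have hsub : mark T N l ⊆ mark T N (V :: l) := Set.subset_union_left
    rcases List.mem_cons.1 hU with rfl | hU'
    · by_cases hxs : x ∈ spread T N (mark T N l)
      · exact spread_mono T N hsub hxs
      · have hxB : x ∈ mark T N (U :: l) := Or.inr ⟨hx, hxs⟩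
        refine Set.mem_biUnion (Finset.mem_range.2 hN) (Or.inl ?_)
        simpa using hxB
    · exact spread_mono T N hsub (ih U hU' hx)

lemma forward_cover (N : ℕ) (hN : 1 ≤ N) (A : Set X)
    (hcov : ∀ x : X, x ∈ spread T N A) (m₀ : ℕ) :
    (⋃ j : ℕ, (⇑T)^[j] '' ((⇑T)^[m₀] '' A)) = univ := by
  refine Set.eq_univ_of_forall fun x => ?_
  set y := (⇑T.symm)^[m₀ + (N - 1)] x with hy
  have hxy : (⇑T)^[m₀ + (N - 1)] y = x := iterRI T _ x
  obtain ⟨m, hm, hcase⟩ := Set.mem_iUnion₂.1 (hcov y)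
  have hmN : m ≤ N - 1 := by have := Finset.mem_range.1 hm; omega
  rcases hcase with ⟨a, ha, hay⟩ | ⟨a, ha, hay⟩
  · refine Set.mem_iUnion.2 ⟨(N - 1) + m, ⟨(⇑T)^[m₀] a, ⟨a, ha, rfl⟩, ?_⟩⟩
    rw [← Function.iterate_add_apply, ← hxy, ← hay, ← Function.iterate_add_apply]
    congr 1; omega
  · have ha' : (⇑T)^[m] y = a := by rw [← hay]; exact iterRI T m a
    refine Set.mem_iUnion.2 ⟨(N - 1) - m, ⟨(⇑T)^[m₀] a, ⟨a, ha, rfl⟩, ?_⟩⟩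
    rw [← Function.iterate_add_apply, ← ha', ← Function.iterate_add_apply, ← hxy]
    congr 1; omega

lemma exists_good_nbhd [CompactSpace X] [T2Space X] [TotallyDisconnectedSpace X]
    (hT : ∀ (x : X) (m : ℕ), 1 ≤ m → (⇑T)^[m] x ≠ x) (N : ℕ) (x : X) :
    ∃ U : Set X, IsClopen U ∧ x ∈ U ∧
      ∀ m, 1 ≤ m → m < N → Disjoint U ((⇑T)^[m] '' U) := by
  classical
  set S : Finset X := (Finset.Ico 1 N).image (fun m => (⇑T)^[m] x) with hS
  have hxS : x ∈ (↑S : Set X)ᶜ := by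
    intro hx
    obtain ⟨m, hm, hmx⟩ := Finset.mem_image.1 (Finset.mem_coe.1 hx)
    exact hT x m (Finset.mem_Ico.1 hm).1 hmx
  have hop : IsOpen ((↑S : Set X)ᶜ) := (S.finite_toSet.isClosed).isOpen_compl
  obtain ⟨V, hV, hxV, hVS⟩ := compact_exists_isClopen_in_isOpen hop hxS
  refine ⟨V ∩ ⋂ m ∈ Finset.Ico 1 N, (⇑T)^[m] ⁻¹' Vᶜ, ?_, ?_, ?_⟩
  · exact hV.inter (isClopen_biInter_finset fun m _ =>
      hV.compl.preimage (T.continuous.iterate m))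
  · refine ⟨hxV, Set.mem_iInter₂.2 fun m hm => ?_⟩
    intro hmV
    exact (hVS hmV)
      (Finset.mem_coe.2 (Finset.mem_image.2 ⟨m, hm, rfl⟩) : (⇑T)^[m] x ∈ (↑S : Set X))
  · intro m hm1 hmN
    rw [Set.disjoint_right]
    rintro _ ⟨u, hu, rfl⟩ hmem
    exact Set.mem_iInter₂.1 hu.2 m (Finset.mem_Ico.2 ⟨hm1, hmN⟩) hmem.1

end Stmt6Aux

/-- Corollary 2: for an aperiodic homeomorphism `T` of a Cantor set, Borel probability
measures `μ_1, …, μ_k` and `ε > 0`, there is a clopen set `A` with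
`⋃_{j ≥ 0} T^j(A) = X` and `μ_i(A) < ε` for all `i`. -/
theorem stmt_6 {X : Type*} [TopologicalSpace X] [CompactSpace X]
    [TopologicalSpace.MetrizableSpace X] [TotallyDisconnectedSpace X] [PerfectSpace X]
    [Nonempty X] [MeasurableSpace X] [BorelSpace X]
    (T : X ≃ₜ X) (hT : ∀ (x : X) (m : ℕ), 1 ≤ m → (⇑T)^[m] x ≠ x)
    (k : ℕ) (μ : Fin k → Measure X) (hμ : ∀ i, IsProbabilityMeasure (μ i))
    (ε : ℝ) (hε : 0 < ε) :
    ∃ A : Set X, IsClopen A ∧ (⋃ j : ℕ, (⇑T)^[j] '' A) = univ ∧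
      ∀ i, μ i A < ENNReal.ofReal ε := by
  classical
  set N : ℕ := Nat.ceil ((k : ℝ) / ε) + 1 with hNdef
  have hN : 1 ≤ N := Nat.le_add_left 1 _
  choose U hUclopen hUmem hUdisj using Stmt6Aux.exists_good_nbhd T hT N
  obtain ⟨t, ht⟩ := IsCompact.elim_finite_subcover isCompact_univ U
    (fun x => (hUclopen x).isOpen) (fun x _ => Set.mem_iUnion.2 ⟨x, hUmem x⟩)
  set l : List (Set X) := t.toList.map U with hl
  have hlmem : ∀ V ∈ l, ∃ x, V = U x := by
    intro V hV
    obtain ⟨x, _, rfl⟩ := List.mem_map.1 hV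
    exact ⟨x, rfl⟩
  set A := Stmt6Aux.mark T N l with hA
  have hAclopen : IsClopen A := by
    refine Stmt6Aux.mark_isClopen T N l fun V hV => ?_
    obtain ⟨x, rfl⟩ := hlmem V hV; exact hUclopen x
  have hAdisj : ∀ m, 1 ≤ m → m < N → Disjoint A ((⇑T)^[m] '' A) := by
    refine Stmt6Aux.mark_disjoint T N l fun V hV => ?_
    obtain ⟨x, rfl⟩ := hlmem V hV; exact hUdisj x
  have hcov : ∀ x : X, x ∈ Stmt6Aux.spread T N A := by
    intro x
    obtain ⟨x₀, hx₀, hxU⟩ := Set.mem_iUnion₂.1 (ht (Set.mem_univ x))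
    refine Stmt6Aux.mark_cover T N hN l (U x₀) ?_ hxU
    exact List.mem_map.2 ⟨x₀, Finset.mem_toList.2 hx₀, rfl⟩
  -- measure selection
  set ν : Measure X := ∑ i, μ i with hν
  have hCmeas : ∀ m : ℕ, MeasurableSet ((⇑T)^[m] '' A) := fun m =>
    (Stmt6Aux.iterImage_isClopen T m hAclopen).isOpen.measurableSet
  have hpair : ∀ m m', m < m' → m' < N →
      Disjoint ((⇑T)^[m] '' A) ((⇑T)^[m'] '' A) := by
    intro m m' hmm' hm'N
    have heq : (⇑T)^[m'] '' A = (⇑T)^[m] '' ((⇑T)^[m' - m] '' A) := by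
      rw [← Set.image_comp, ← Function.iterate_add]
      have hmeq : m + (m' - m) = m' := by omega
      rw [hmeq]
    rw [heq, Set.disjoint_image_iff (Function.Injective.iterate T.injective m)]
    exact hAdisj (m' - m) (by omega) (by omega)
  have hsum : ∑ m ∈ Finset.range N, ν ((⇑T)^[m] '' A) ≤ (k : ℝ≥0∞) := by
    have hdisj : (↑(Finset.range N) : Set ℕ).PairwiseDisjoint
        (fun m => (⇑T)^[m] '' A) := by
      intro m hm m' hm' hne
      rcases lt_or_gt_of_ne hne with h | h
      · exact hpair m m' h (Finset.mem_range.1 (Finset.mem_coe.1 hm'))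
      · exact (hpair m' m h (Finset.mem_range.1 (Finset.mem_coe.1 hm))).symm
    rw [← measure_biUnion_finset hdisj fun m _ => hCmeas m]
    have hν_univ : ν univ = (k : ℝ≥0∞) := by
      rw [hν, Measure.finset_sum_apply]
      have : ∀ i : Fin k, μ i univ = 1 := fun i => (hμ i).measure_univ
      simp [this]
    calc ν (⋃ m ∈ Finset.range N, (⇑T)^[m] '' A) ≤ ν univ :=
          measure_mono (Set.subset_univ _)
      _ = (k : ℝ≥0∞) := hν_univ
  have hexists : ∃ m ∈ Finset.range N, ν ((⇑T)^[m] '' A) < ENNReal.ofReal ε := by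
    by_contra h
    push_neg at h
    have hge : (N : ℝ≥0∞) * ENNReal.ofReal ε ≤ ∑ m ∈ Finset.range N,
        ν ((⇑T)^[m] '' A) := by
      calc (N : ℝ≥0∞) * ENNReal.ofReal ε
          = ∑ _m ∈ Finset.range N, ENNReal.ofReal ε := by
            rw [Finset.sum_const, Finset.card_range, nsmul_eq_mul]
        _ ≤ _ := Finset.sum_le_sum fun m hm => h m hm
    have hkN : (k : ℝ≥0∞) < (N : ℝ≥0∞) * ENNReal.ofReal ε := by
      rw [← ENNReal.ofReal_natCast k, ← ENNReal.ofReal_natCast N,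
        ← ENNReal.ofReal_mul (by positivity)]
      rw [ENNReal.ofReal_lt_ofReal_iff (by positivity)]
      have h1 : (k : ℝ) / ε < N := by
        have := Nat.le_ceil ((k : ℝ) / ε)
        have : (Nat.ceil ((k : ℝ) / ε) : ℝ) < N := by
          rw [hNdef]; push_cast; linarith
        linarith [Nat.le_ceil ((k : ℝ) / ε)]
      calc (k : ℝ) = ((k : ℝ) / ε) * ε := by field_simp
        _ < (N : ℝ) * ε := by
            exact mul_lt_mul_of_pos_right h1 hε
    exact absurd (le_trans hge hsum) (not_le.2 hkN)
  obtain ⟨m₀, _, hsmall⟩ := hexists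
  refine ⟨(⇑T)^[m₀] '' A, Stmt6Aux.iterImage_isClopen T m₀ hAclopen,
    Stmt6Aux.forward_cover T N hN A hcov m₀, fun i => lt_of_le_of_lt ?_ hsmall⟩
  have : μ i ((⇑T)^[m₀] '' A) ≤ ∑ i', μ i' ((⇑T)^[m₀] '' A) :=
    Finset.single_le_sum (f := fun i' => μ i' ((⇑T)^[m₀] '' A))
      (fun _ _ => zero_le) (Finset.mem_univ i)
  simpa [hν, Measure.finset_sum_apply] using this
end

section
/- Let X be a Cantor set. If T is a minimal homeomorphism of X and E is a nonempty clopen subset of X, then there exist finitely many pairwise disjoint clopen T-towers ξ_1, ..., ξ_m whose supports cover X and such that E is exactly the union of the bases of these towers. (Equivalently, the first-return map of T to E is well-defined with a finite, continuous return-time function.) -/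
open Set Function

private lemma kr_pow_apply {X : Type*} [TopologicalSpace X] (T : X ≃ₜ X) (n : ℕ) (x : X) :
    (T.toEquiv ^ (n : ℤ)) x = (⇑T)^[n] x := by
  rw [zpow_natCast]
  induction n generalizing x with
  | zero => rfl
  | succ k ih =>
    rw [pow_succ, Equiv.Perm.mul_apply, Function.iterate_succ_apply]
    exact ih (T x)

private lemma kr_pow_apply_neg {X : Type*} [TopologicalSpace X] (T : X ≃ₜ X) (n : ℕ) (x : X) :
    (T.toEquiv ^ (-(n : ℤ))) x = (⇑T.symm)^[n] x := by
  have h : (T.toEquiv ^ (n : ℤ)) ((⇑T.symm)^[n] x) = x := by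
    rw [kr_pow_apply]
    exact (Function.LeftInverse.iterate T.apply_symm_apply n) x
  rw [zpow_neg, Equiv.Perm.inv_def, Equiv.symm_apply_eq]
  exact h.symm

private lemma kr_continuous_zpow {X : Type*} [TopologicalSpace X] (T : X ≃ₜ X) (n : ℤ) :
    Continuous fun x : X => (T.toEquiv ^ n) x := by
  rcases le_or_gt 0 n with hn | hn
  · have he : (fun x : X => (T.toEquiv ^ n) x) = (⇑T)^[n.toNat] := by
      funext x
      rw [← kr_pow_apply T n.toNat x]
      congr 1
      rw [Int.toNat_of_nonneg hn]
    rw [he]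
    exact T.continuous.iterate _
  · have he : (fun x : X => (T.toEquiv ^ n) x) = (⇑T.symm)^[(-n).toNat] := by
      funext x
      rw [← kr_pow_apply_neg T (-n).toNat x]
      congr 1
      rw [Int.toNat_of_nonneg (by omega : (0:ℤ) ≤ -n)]
      ring_nf
    rw [he]
    exact T.symm.continuous.iterate _

/-- Kakutani–Rokhlin partitions for minimal Cantor systems: if `T` is minimal and `E` is
a nonempty clopen set, then `X` is partitioned into finitely many clopen `T`-towers
whose bases exactly partition `E`. -/
theorem stmt_12 {X : Type*} [TopologicalSpace X] [CompactSpace X]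
    [TopologicalSpace.MetrizableSpace X] [TotallyDisconnectedSpace X] [PerfectSpace X]
    [Nonempty X]
    (T : X ≃ₜ X)
    (hmin : ∀ x : X, Dense (Set.range fun n : ℤ => (T.toEquiv ^ n) x))
    (E : Set X) (hE : IsClopen E) (hEne : E.Nonempty) :
    ∃ (m : ℕ) (B : Fin m → Set X) (h : Fin m → ℕ),
      (∀ i, IsClopen (B i)) ∧ (∀ i, 1 ≤ h i) ∧
      (∀ i j i' j', j < h i → j' < h i' → (i, j) ≠ (i', j') →
        Disjoint ((⇑T)^[j] '' B i) ((⇑T)^[j'] '' B i')) ∧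
      (⋃ i, ⋃ j ∈ Finset.range (h i), (⇑T)^[j] '' B i) = univ ∧
      (⋃ i, B i) = E := by
  classical
  have hTc : Continuous ⇑T := T.continuous
  have hLI : Function.LeftInverse ⇑T ⇑T.symm := T.apply_symm_apply
  -- open cover of X by preimages of E under all powers of T
  have hcov : (univ : Set X) ⊆ ⋃ n : ℤ, (fun x => (T.toEquiv ^ n) x) ⁻¹' E := by
    intro x _
    obtain ⟨y, hy, hyE⟩ := (hmin x).exists_mem_open hE.isOpen hEne
    obtain ⟨n, rfl⟩ := hy
    exact mem_iUnion.2 ⟨n, hyE⟩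
  obtain ⟨t, ht⟩ := isCompact_univ.elim_finite_subcover _
    (fun n : ℤ => hE.isOpen.preimage (kr_continuous_zpow T n)) hcov
  set N : ℕ := t.sup fun n => n.natAbs with hN
  have htN : ∀ n ∈ t, n.natAbs ≤ N := fun n hn => Finset.le_sup hn
  set K : ℕ := 2 * N + 2 with hKdef
  have hhit : ∀ w : X, ∃ n ∈ t, (T.toEquiv ^ n) w ∈ E := by
    intro w
    have := ht (mem_univ w)
    simpa using this
  -- forward hitting within K steps
  have hfwd : ∀ x : X, ∃ n : ℕ, 1 ≤ n ∧ n ≤ K ∧ (⇑T)^[n] x ∈ E := by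
    intro x
    obtain ⟨n, hnt, hnE⟩ := hhit ((⇑T)^[N + 1] x)
    have hab := htN n hnt
    refine ⟨(n + (N + 1 : ℕ)).toNat, by omega, by omega, ?_⟩
    have h1 : (T.toEquiv ^ n) ((⇑T)^[N + 1] x) = (⇑T)^[(n + (N + 1 : ℕ)).toNat] x := by
      calc (T.toEquiv ^ n) ((⇑T)^[N + 1] x)
          = (T.toEquiv ^ n) ((T.toEquiv ^ ((N + 1 : ℕ) : ℤ)) x) := by
            rw [kr_pow_apply]
        _ = (T.toEquiv ^ (n + ((N + 1 : ℕ) : ℤ))) x := by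
            rw [zpow_add, Equiv.Perm.mul_apply]
        _ = (T.toEquiv ^ (((n + (N + 1 : ℕ)).toNat : ℕ) : ℤ)) x := by
            have hcast : n + ((N + 1 : ℕ) : ℤ) = (((n + (N + 1 : ℕ)).toNat : ℕ) : ℤ) := by
              omega
            conv_lhs => rw [hcast]
        _ = (⇑T)^[(n + (N + 1 : ℕ)).toNat] x := kr_pow_apply T _ x
    rwa [h1] at hnE
  -- backward hitting within K steps
  have hbwd : ∀ x : X, ∃ n : ℕ, 1 ≤ n ∧ n ≤ K ∧ (⇑T.symm)^[n] x ∈ E := by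
    intro x
    obtain ⟨n, hnt, hnE⟩ := hhit ((⇑T.symm)^[N + 1] x)
    have hab := htN n hnt
    refine ⟨(((N + 1 : ℕ) : ℤ) - n).toNat, by omega, by omega, ?_⟩
    have h1 : (T.toEquiv ^ n) ((⇑T.symm)^[N + 1] x)
        = (⇑T.symm)^[(((N + 1 : ℕ) : ℤ) - n).toNat] x := by
      calc (T.toEquiv ^ n) ((⇑T.symm)^[N + 1] x)
          = (T.toEquiv ^ n) ((T.toEquiv ^ (-((N + 1 : ℕ) : ℤ))) x) := by
            rw [kr_pow_apply_neg]
        _ = (T.toEquiv ^ (n + -((N + 1 : ℕ) : ℤ))) x := by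
            rw [zpow_add, Equiv.Perm.mul_apply]
        _ = (T.toEquiv ^ (-(((((N + 1 : ℕ) : ℤ) - n).toNat : ℕ) : ℤ))) x := by
            have hcast : n + -((N + 1 : ℕ) : ℤ)
                = -(((((N + 1 : ℕ) : ℤ) - n).toNat : ℕ) : ℤ) := by omega
            conv_lhs => rw [hcast]
        _ = (⇑T.symm)^[(((N + 1 : ℕ) : ℤ) - n).toNat] x := kr_pow_apply_neg T _ x
    rwa [h1] at hnE
  -- first return time
  have hPex : ∀ x : X, ∃ n : ℕ, (⇑T)^[n + 1] x ∈ E := by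
    intro x
    obtain ⟨n, h1, _, hE'⟩ := hfwd x
    exact ⟨n - 1, by rwa [Nat.sub_add_cancel h1]⟩
  have hfind_lt : ∀ x : X, Nat.find (hPex x) < K := by
    intro x
    obtain ⟨n, h1, hK', hE'⟩ := hfwd x
    have : Nat.find (hPex x) ≤ n - 1 := Nat.find_le (by rwa [Nat.sub_add_cancel h1])
    omega
  -- the bases
  set B : Fin K → Set X := fun i =>
    (E ∩ (⇑T)^[(i : ℕ) + 1] ⁻¹' E) ∩ ⋂ j ∈ Finset.Ioo 0 ((i : ℕ) + 1), (⇑T)^[j] ⁻¹' Eᶜ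
    with hBdef
  have hmemB : ∀ (i : Fin K) (x : X), x ∈ B i ↔
      x ∈ E ∧ (⇑T)^[(i : ℕ) + 1] x ∈ E ∧
        ∀ j, 0 < j → j < (i : ℕ) + 1 → (⇑T)^[j] x ∉ E := by
    intro i x
    simp [hBdef, Finset.mem_Ioo, and_assoc]
  have hmemB' : ∀ (i : Fin K) (x : X),
      x ∈ B i ↔ x ∈ E ∧ ∃ hx : x ∈ E, Nat.find (hPex x) = (i : ℕ) := by
    intro i x
    rw [hmemB]
    constructor
    · rintro ⟨hxE, hxi, hxmin⟩
      refine ⟨hxE, hxE, le_antisymm (Nat.find_le hxi) ?_⟩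
      by_contra hcon
      push_neg at hcon
      exact hxmin (Nat.find (hPex x) + 1) (Nat.succ_pos _) (by omega) (Nat.find_spec (hPex x))
    · rintro ⟨hxE, -, hfi⟩
      refine ⟨hxE, ?_, ?_⟩
      · rw [← hfi]; exact Nat.find_spec (hPex x)
      · intro j hj0 hji hjE
        have : (⇑T)^[(j - 1) + 1] x ∈ E := by rwa [Nat.sub_add_cancel hj0]
        exact Nat.find_min (hPex x) (by omega) this
  refine ⟨K, B, fun i => (i : ℕ) + 1, ?_, fun i => Nat.succ_le_succ (Nat.zero_le _), ?_, ?_, ?_⟩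
  · -- clopen
    intro i
    exact (hE.inter (hE.preimage (hTc.iterate _))).inter
      (isClopen_biInter_finset fun j _ => hE.compl.preimage (hTc.iterate _))
  · -- disjointness
    have key : ∀ (i i' : Fin K) (j j' : ℕ), j < (i : ℕ) + 1 → j' < (i' : ℕ) + 1 → j ≤ j' →
        (i, j) ≠ (i', j') → Disjoint ((⇑T)^[j] '' B i) ((⇑T)^[j'] '' B i') := by
      intro i i' j j' hj hj' hle hne
      rw [Set.disjoint_left]
      rintro y ⟨x, hx, rfl⟩ ⟨x', hx', heq⟩
      have hd : (⇑T)^[j] ((⇑T)^[j' - j] x') = (⇑T)^[j] x := by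
        rw [← Function.iterate_add_apply, show j + (j' - j) = j' from by omega]
        exact heq
      have hxx : (⇑T)^[j' - j] x' = x := (T.injective.iterate j) hd
      rcases Nat.eq_or_lt_of_le hle with heqj | hlt
      · -- j = j', so x = x', so i = i'
        have hx0 : x' = x := by
          rw [← hxx, show j' - j = 0 from by omega, Function.iterate_zero_apply]
        subst hx0
        obtain ⟨-, -, hfi⟩ := (hmemB' i x').1 hx
        obtain ⟨-, -, hfi'⟩ := (hmemB' i' x').1 hx'
        apply hne
        have : i = i' := Fin.ext (by rw [← hfi, ← hfi'])
        rw [this, heqj]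
      · -- 0 < j' - j < i' + 1 and T^[j'-j] x' = x ∈ E : contradiction
        obtain ⟨hx'E, hx'i, hx'min⟩ := (hmemB i' x').1 hx'
        have hxE : x ∈ E := ((hmemB i x).1 hx).1
        exact hx'min (j' - j) (by omega) (by omega) (by rwa [hxx])
    intro i j i' j' hj hj' hne
    rcases le_total j j' with hle | hle
    · exact key i i' j j' hj hj' hle hne
    · exact (key i' i j' j hj' hj hle (by simpa [Prod.ext_iff, and_comm, eq_comm] using hne)).symm
  · -- towers cover X
    rw [eq_univ_iff_forall]
    intro y
    have hb : ∃ jj : ℕ, (⇑T.symm)^[jj] y ∈ E := by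
      by_cases hy : y ∈ E
      · exact ⟨0, hy⟩
      · obtain ⟨n, -, -, hn⟩ := hbwd y
        exact ⟨n, hn⟩
    set j₀ := Nat.find hb with hj₀
    set x := (⇑T.symm)^[j₀] y with hxdef
    have hxE : x ∈ E := Nat.find_spec hb
    set n₀ := Nat.find (hPex x) with hn₀
    have hyx : (⇑T)^[j₀] x = y := (hLI.iterate j₀) y
    have hj₀le : j₀ ≤ n₀ := by
      by_contra hcon
      push_neg at hcon
      have h1 : (⇑T)^[n₀ + 1] x ∈ E := Nat.find_spec (hPex x)
      have h2 : (⇑T)^[n₀ + 1] x = (⇑T.symm)^[j₀ - (n₀ + 1)] y := by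
        have hx2 : x = (⇑T.symm)^[n₀ + 1] ((⇑T.symm)^[j₀ - (n₀ + 1)] y) := by
          rw [← Function.iterate_add_apply,
            show (n₀ + 1) + (j₀ - (n₀ + 1)) = j₀ from by omega]
        rw [hx2]
        exact (hLI.iterate (n₀ + 1)) _
      rw [h2] at h1
      exact Nat.find_min hb (show j₀ - (n₀ + 1) < j₀ from by omega) h1
    have hxB : x ∈ B ⟨n₀, hfind_lt x⟩ := (hmemB' _ _).2 ⟨hxE, hxE, rfl⟩
    refine mem_iUnion.2 ⟨⟨n₀, hfind_lt x⟩, ?_⟩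
    refine mem_iUnion.2 ⟨j₀, mem_iUnion.2 ⟨Finset.mem_range.2 (Nat.lt_succ_of_le hj₀le), ?_⟩⟩
    exact ⟨x, hxB, hyx⟩
  · -- union of bases is E
    ext x
    simp only [mem_iUnion]
    constructor
    · rintro ⟨i, hx⟩
      exact ((hmemB i x).1 hx).1
    · intro hx
      exact ⟨⟨Nat.find (hPex x), hfind_lt x⟩, (hmemB' _ _).2 ⟨hx, hx, rfl⟩⟩
end

section
/- Let X be a Cantor set and T an aperiodic homeomorphism of X. Then for every N ≥ 1 there exists a nonempty clopen set A ⊆ X with A ∩ T^j(A) = ∅ for 1 ≤ j ≤ N−1 and ⋃_{j≥0} T^j(A) = X; moreover this union can be taken over finitely many j (i.e., there is M with X = ⋃_{j=0}^{M} T^j(A)). -/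
open Set Function

private lemma iterClopen {X : Type*} [TopologicalSpace X] (S : X ≃ₜ X) (j : ℕ)
    {A : Set X} (hA : IsClopen A) : IsClopen ((⇑S)^[j] '' A) := by
  induction j with
  | zero => simpa using hA
  | succ n ih =>
      rw [Function.iterate_succ', Set.image_comp,
        show ⇑S '' ((⇑S)^[n] '' A) = ⇑S.symm ⁻¹' ((⇑S)^[n] '' A) from
          S.toEquiv.image_eq_preimage_symm _]
      exact ih.preimage S.symm.continuous

private lemma key_ind {X : Type*} [TopologicalSpace X] (T : X ≃ₜ X) (N : ℕ)
    (U : X → Set X) (hUc : ∀ x, IsClopen (U x))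
    (hUd : ∀ x, ∀ j, 1 ≤ j → j ≤ N - 1 → Disjoint (U x) ((⇑T)^[j] '' U x)) :
    ∀ t : Finset X, ∃ A : Set X, IsClopen A ∧
      (∀ j, 1 ≤ j → j ≤ N - 1 → Disjoint A ((⇑T)^[j] '' A)) ∧
      ∀ x ∈ t, U x ⊆ ⋃ j ∈ Finset.Icc 0 (N - 1),
        ((⇑T)^[j] '' A ∪ (⇑T.symm)^[j] '' A) := by
  classical
  intro t
  induction t using Finset.induction_on with
  | empty =>
      exact ⟨∅, isClopen_empty, fun j _ _ => by simp, fun x hx => by simp at hx⟩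
  | @insert a t ha ih =>
      obtain ⟨A, hAc, hAd, hAcov⟩ := ih
      set E : Set X := ⋃ j ∈ Finset.Icc 1 (N - 1),
        ((⇑T)^[j] '' A ∪ (⇑T.symm)^[j] '' A) with hE
      have hEc : IsClopen E := by
        apply Set.Finite.isClopen_biUnion (Finset.finite_toSet _)
        intro j _
        exact (iterClopen T j hAc).union (iterClopen T.symm j hAc)
      set B : Set X := U a \ E with hB
      refine ⟨A ∪ B, hAc.union ((hUc a).diff hEc), ?_, ?_⟩
      · intro j hj1 hj2
        rw [Set.image_union, Set.disjoint_union_left, Set.disjoint_union_right,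
          Set.disjoint_union_right]
        refine ⟨⟨hAd j hj1 hj2, ?_⟩, ?_, ?_⟩
        · -- Disjoint A (T^j '' B)
          rw [Set.disjoint_right]
          rintro y ⟨b, hbB, rfl⟩ hyA
          apply hbB.2
          rw [hE]
          simp only [Set.mem_iUnion]
          refine ⟨j, by simp [Finset.mem_Icc, hj1, hj2], Or.inr ?_⟩
          refine ⟨(⇑T)^[j] b, hyA, ?_⟩
          exact Function.LeftInverse.iterate T.symm_apply_apply j b
        · -- Disjoint B (T^j '' A)
          rw [Set.disjoint_left]
          rintro y hyB hyTA
          apply hyB.2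
          rw [hE]
          simp only [Set.mem_iUnion]
          exact ⟨j, by simp [Finset.mem_Icc, hj1, hj2], Or.inl hyTA⟩
        · -- Disjoint B (T^j '' B)
          exact Set.disjoint_of_subset (Set.diff_subset) (Set.image_mono Set.diff_subset)
            (hUd a j hj1 hj2)
      · intro x hx y hy
        have hmono : ∀ j, ((⇑T)^[j] '' A ∪ (⇑T.symm)^[j] '' A) ⊆
            ((⇑T)^[j] '' (A ∪ B) ∪ (⇑T.symm)^[j] '' (A ∪ B)) := fun j =>
          Set.union_subset_union (Set.image_mono Set.subset_union_left)
            (Set.image_mono Set.subset_union_left)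
        rcases Finset.mem_insert.1 hx with rfl | hx
        · by_cases hyE : y ∈ E
          · rw [hE] at hyE
            simp only [Set.mem_iUnion] at hyE
            obtain ⟨j, hj, hyj⟩ := hyE
            simp only [Set.mem_iUnion]
            exact ⟨j, Finset.mem_Icc.2 ⟨Nat.zero_le _, (Finset.mem_Icc.1 hj).2⟩,
              hmono j hyj⟩
          · simp only [Set.mem_iUnion]
            refine ⟨0, by simp, Or.inl ?_⟩
            simp only [Function.iterate_zero, Set.image_id]
            exact Or.inr ⟨hy, hyE⟩
        · have := hAcov x hx hy
          simp only [Set.mem_iUnion] at this ⊢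
          obtain ⟨j, hj, hyj⟩ := this
          exact ⟨j, hj, hmono j hyj⟩

/-- For an aperiodic homeomorphism `T` of a Cantor set and every `N ≥ 1` there is a
nonempty clopen set `A` with `A ∩ T^j(A) = ∅` for `1 ≤ j ≤ N - 1`, whose forward
iterates cover `X`, in fact finitely many of them do. -/
theorem stmt_13 {X : Type*} [TopologicalSpace X] [CompactSpace X]
    [TopologicalSpace.MetrizableSpace X] [TotallyDisconnectedSpace X] [PerfectSpace X]
    [Nonempty X]
    (T : X ≃ₜ X) (hT : ∀ (x : X) (m : ℕ), 1 ≤ m → (⇑T)^[m] x ≠ x)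
    (N : ℕ) (hN : 1 ≤ N) :
    ∃ A : Set X, IsClopen A ∧ A.Nonempty ∧
      (∀ j, 1 ≤ j → j ≤ N - 1 → Disjoint A ((⇑T)^[j] '' A)) ∧
      (⋃ j : ℕ, (⇑T)^[j] '' A) = univ ∧
      ∃ M : ℕ, (⋃ j ∈ Finset.range (M + 1), (⇑T)^[j] '' A) = univ := by
  classical
  letI : MetricSpace X := TopologicalSpace.metrizableSpaceMetric X
  -- Step 1: small clopen neighborhoods with disjoint iterates
  have step1 : ∀ x : X, ∃ U : Set X, IsClopen U ∧ x ∈ U ∧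
      ∀ j, 1 ≤ j → j ≤ N - 1 → Disjoint U ((⇑T)^[j] '' U) := by
    intro x
    have hW : ∀ j : ℕ, ∃ W : Set X, IsOpen W ∧ x ∈ W ∧
        (1 ≤ j → Disjoint W ((⇑T)^[j] '' W)) := by
      intro j
      by_cases hj : 1 ≤ j
      · obtain ⟨u, v, hu, hv, hxu, hxv, huv⟩ := t2_separation (hT x j hj)
        refine ⟨v ∩ (⇑T)^[j] ⁻¹' u, hv.inter (hu.preimage (T.continuous.iterate j)), ⟨hxv, hxu⟩, ?_⟩
        intro _
        rw [Set.disjoint_left]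
        rintro y ⟨hyv, -⟩ ⟨z, ⟨-, hzu⟩, rfl⟩
        exact Set.disjoint_left.1 huv hzu hyv
      · exact ⟨Set.univ, isOpen_univ, trivial, fun h => absurd h hj⟩
    choose W hWo hWx hWd using hW
    set V : Set X := ⋂ j ∈ Finset.Icc 1 (N - 1), W j with hV
    have hVo : IsOpen V := isOpen_biInter_finset fun j _ => hWo j
    have hVx : x ∈ V := Set.mem_biInter fun j _ => hWx j
    obtain ⟨U, hUb, hxU, hUV⟩ :=
      isTopologicalBasis_isClopen.exists_subset_of_mem_open hVx hVo
    refine ⟨U, hUb, hxU, fun j hj1 hj2 => ?_⟩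
    have hsub : U ⊆ W j := fun y hy => by
      have := hUV hy
      rw [hV] at this
      exact Set.mem_iInter₂.1 this j (Finset.mem_Icc.2 ⟨hj1, hj2⟩)
    exact Set.disjoint_of_subset hsub (Set.image_mono hsub) (hWd j hj1)
  choose U hUc hUx hUd using step1
  -- Step 2: finite subcover
  obtain ⟨t, ht⟩ := IsCompact.elim_finite_subcover isCompact_univ U
    (fun x => (hUc x).isOpen) (fun x _ => Set.mem_iUnion.2 ⟨x, hUx x⟩)
  -- Step 3: build A
  obtain ⟨A, hAc, hAd, hAcov⟩ := key_ind T N U hUc hUd t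
  -- Cover properties
  have hcov : ∀ y : X, ∃ j ≤ N - 1, y ∈ (⇑T)^[j] '' A ∨ y ∈ (⇑T.symm)^[j] '' A := by
    intro y
    obtain ⟨x, hxt, hyx⟩ := Set.mem_iUnion₂.1 (ht (Set.mem_univ y))
    have := hAcov x hxt hyx
    simp only [Set.mem_iUnion] at this
    obtain ⟨j, hj, hyj⟩ := this
    exact ⟨j, (Finset.mem_Icc.1 hj).2, hyj⟩
  have hfwd : ∀ z : X, ∃ j ≤ 2 * (N - 1), z ∈ (⇑T)^[j] '' A := by
    intro z
    obtain ⟨j, hj, hc⟩ := hcov ((⇑T.symm)^[N - 1] z)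
    rcases hc with ⟨a, haA, hae⟩ | ⟨a, haA, hae⟩
    · refine ⟨N - 1 + j, by omega, a, haA, ?_⟩
      have : (⇑T)^[N - 1] ((⇑T)^[j] a) = (⇑T)^[N - 1] ((⇑T.symm)^[N - 1] z) := by rw [hae]
      rw [← Function.iterate_add_apply,
        Function.LeftInverse.iterate T.apply_symm_apply (N - 1) z] at this
      exact this
    · refine ⟨N - 1 - j, by omega, a, haA, ?_⟩
      have h1 : (⇑T)^[N - 1] ((⇑T.symm)^[j] a) = (⇑T)^[N - 1] ((⇑T.symm)^[N - 1] z) := by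
        rw [hae]
      rw [Function.LeftInverse.iterate T.apply_symm_apply (N - 1) z] at h1
      have h2 : (⇑T)^[N - 1] ((⇑T.symm)^[j] a) = (⇑T)^[N - 1 - j] a := by
        conv_lhs => rw [show N - 1 = (N - 1 - j) + j by omega]
        rw [Function.iterate_add_apply,
          Function.LeftInverse.iterate T.apply_symm_apply j a]
      rw [h2] at h1
      exact h1
  have hfin : (⋃ j ∈ Finset.range (2 * (N - 1) + 1), (⇑T)^[j] '' A) = Set.univ := by
    ext z
    simp only [Set.mem_iUnion, Set.mem_univ, iff_true]
    obtain ⟨j, hj, hz⟩ := hfwd z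
    exact ⟨j, Finset.mem_range.2 (by omega), hz⟩
  have hne : A.Nonempty := by
    obtain ⟨z⟩ := ‹Nonempty X›
    obtain ⟨j, _, a, haA, _⟩ := hfwd z
    exact ⟨a, haA⟩
  refine ⟨A, hAc, hne, hAd, ?_, 2 * (N - 1), hfin⟩
  apply Set.eq_univ_of_univ_subset
  rw [← hfin]
  exact Set.iUnion₂_subset fun j _ => Set.subset_iUnion (fun j => (⇑T)^[j] '' A) j
end

section
/- Let X be a Cantor set, T a homeomorphism, and C a clopen set such that C, T(C), ..., T^{h−1}(C) are pairwise disjoint for some h ≥ n ≥ 2. Set L = ⌊(h−1)/n⌋ − 1 and E = ⋃_{j=0}^{L} T^{jn}(C). Then E, T(E), ..., T^{n−1}(E) are pairwise disjoint, and ⋃_{i=0}^{n−1} T^i(E) ⊇ ⋃_{j=0}^{(L+1)n − 1} T^j(C). -/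
open Set Function

/-- Building a Rokhlin base from a tower: if `C, T(C), …, T^{h-1}(C)` are pairwise
disjoint with `h ≥ n ≥ 2`, and `L = ⌊(h-1)/n⌋ - 1`, `E = ⋃_{j=0}^{L} T^{jn}(C)`, then
`E, T(E), …, T^{n-1}(E)` are pairwise disjoint and
`⋃_{i=0}^{n-1} T^i(E) ⊇ ⋃_{j=0}^{(L+1)n-1} T^j(C)`. -/
theorem stmt_17 {X : Type*} [TopologicalSpace X] [CompactSpace X]
    [TopologicalSpace.MetrizableSpace X] [TotallyDisconnectedSpace X] [PerfectSpace X]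
    [Nonempty X]
    (T : X ≃ₜ X) (n h : ℕ) (hn : 2 ≤ n) (hnh : n ≤ h)
    (C : Set X) (hC : IsClopen C)
    (hdisj : ∀ i j, i < h → j < h → i ≠ j →
      Disjoint ((⇑T)^[i] '' C) ((⇑T)^[j] '' C))
    (L : ℕ) (hL : L = (h - 1) / n - 1)
    (E : Set X) (hE : E = ⋃ j ∈ Finset.range (L + 1), (⇑T)^[j * n] '' C) :
    (∀ i j, i < n → j < n → i ≠ j →
      Disjoint ((⇑T)^[i] '' E) ((⇑T)^[j] '' E)) ∧
    (⋃ j ∈ Finset.range ((L + 1) * n), (⇑T)^[j] '' C) ⊆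
      ⋃ i ∈ Finset.range n, (⇑T)^[i] '' E := by
  have hnpos : 0 < n := by omega
  have hLn : (L + 1) * n ≤ h := by
    subst hL
    rcases Nat.eq_zero_or_pos ((h - 1) / n) with h0 | hpos
    · simpa [h0] using hnh
    · have h1 : ((h - 1) / n - 1 + 1) = (h - 1) / n := by omega
      rw [h1]
      have := Nat.div_mul_le_self (h - 1) n
      omega
  have key : ∀ a b : ℕ, (⇑T)^[a] '' ((⇑T)^[b] '' C) = (⇑T)^[a + b] '' C := by
    intro a b
    rw [Function.iterate_add, Set.image_comp]
  constructor
  · intro i j hi hj hij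
    subst hE
    simp only [Set.image_iUnion]
    rw [Set.disjoint_iUnion_left]
    intro a
    rw [Set.disjoint_iUnion_left]
    intro ha
    rw [Set.disjoint_iUnion_right]
    intro b
    rw [Set.disjoint_iUnion_right]
    intro hb
    simp only [Finset.mem_range] at ha hb
    rw [key, key]
    apply hdisj
    · calc i + a * n < n + a * n := by omega
        _ = (a + 1) * n := by ring
        _ ≤ (L + 1) * n := by
          apply Nat.mul_le_mul_right; omega
        _ ≤ h := hLn
    · calc j + b * n < n + b * n := by omega
        _ = (b + 1) * n := by ring
        _ ≤ (L + 1) * n := by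
          apply Nat.mul_le_mul_right; omega
        _ ≤ h := hLn
    · intro heq
      apply hij
      have h1 : (i + a * n) % n = i % n := Nat.add_mul_mod_self_right i a n
      have h2 : (j + b * n) % n = j % n := Nat.add_mul_mod_self_right j b n
      rw [Nat.mod_eq_of_lt hi] at h1
      rw [Nat.mod_eq_of_lt hj] at h2
      rw [← h1, ← h2, heq]
  · intro x hx
    simp only [Set.mem_iUnion, Finset.mem_range] at hx ⊢
    obtain ⟨j, hj, hxj⟩ := hx
    refine ⟨j % n, Nat.mod_lt _ hnpos, ?_⟩
    have hq : j / n < L + 1 := (Nat.div_lt_iff_lt_mul hnpos).2 hj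
    have : x ∈ (⇑T)^[j % n] '' ((⇑T)^[(j / n) * n] '' C) := by
      rw [key, Nat.mod_add_div' j n]
      exact hxj
    rw [hE]
    refine Set.image_mono ?_ this
    intro y hy
    simp only [Set.mem_iUnion, Finset.mem_range]
    exact ⟨j / n, hq, hy⟩
end

section
/- Let X be a Cantor set. Then the group Homeo(X), equipped with the uniform topology τ (basic neighborhoods U(T; μ_1, ..., μ_n; ε) = {S : μ_i(E(S,T)) < ε, i = 1, ..., n} where E(S,T) = {x : Sx ≠ Tx} ∪ {x : S^{−1}x ≠ T^{−1}x} and μ_i are Borel probability measures), is a Hausdorff topological group: composition and inversion are continuous, and distinct homeomorphisms can be separated by such neighborhoods. -/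
open Set Function MeasureTheory

/-- The uniform topology `τ` on the homeomorphism group of `X`, generated by the basic
neighborhoods `U(T; μ_1, …, μ_n; ε) = {S : μ_i(E(S,T)) < ε}` where
`E(S,T) = {x : Sx ≠ Tx} ∪ {x : S⁻¹x ≠ T⁻¹x}` and the `μ_i` are Borel probability
measures. -/
noncomputable def uniformTopology (X : Type*) [TopologicalSpace X] [MeasurableSpace X] :
    TopologicalSpace (X ≃ₜ X) :=
  TopologicalSpace.generateFrom
    {U | ∃ (T : X ≃ₜ X) (k : ℕ) (μ : Fin k → Measure X),
      (∀ i, IsProbabilityMeasure (μ i)) ∧ ∃ ε : ℝ, 0 < ε ∧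
      U = {S | ∀ i,
        μ i ({x | S x ≠ T x} ∪ {x | S.symm x ≠ T.symm x}) < ENNReal.ofReal ε}}

namespace UniformTopAux

variable {X : Type*} [TopologicalSpace X] [MeasurableSpace X]

/-- The "difference set" `E(S,T)`. -/
def Ediff (S T : X ≃ₜ X) : Set X :=
  {x | S x ≠ T x} ∪ {x | S.symm x ≠ T.symm x}

lemma Ediff_self (S : X ≃ₜ X) : Ediff S S = ∅ := by
  simp [Ediff]

lemma Ediff_symm (S T : X ≃ₜ X) : Ediff S.symm T.symm = Ediff S T := by
  simp only [Ediff, Homeomorph.symm_symm]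
  exact Set.union_comm _ _

lemma Ediff_symm' (S T : X ≃ₜ X) : Ediff S.symm T = Ediff S T.symm := by
  have h := Ediff_symm S T.symm
  rwa [Homeomorph.symm_symm] at h

lemma Ediff_triangle (S T U : X ≃ₜ X) : Ediff S U ⊆ Ediff S T ∪ Ediff T U := by
  intro x hx
  simp only [Ediff, mem_union, mem_setOf_eq] at hx ⊢
  rcases hx with h | h
  · by_cases h1 : S x = T x
    · exact Or.inr (Or.inl (h1 ▸ h))
    · exact Or.inl (Or.inl h1)
  · by_cases h1 : S.symm x = T.symm x
    · exact Or.inr (Or.inr (h1 ▸ h))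
    · exact Or.inl (Or.inr h1)

lemma Ediff_comp (S S₀ T T₀ : X ≃ₜ X) :
    Ediff (T.trans S) (T₀.trans S₀) ⊆
      (Ediff S S₀ ∪ Ediff T T₀) ∪ (⇑T₀ ⁻¹' Ediff S S₀ ∪ ⇑S₀.symm ⁻¹' Ediff T T₀) := by
  intro x hx
  simp only [Ediff, mem_union, mem_setOf_eq, mem_preimage, Homeomorph.trans_apply,
    Homeomorph.symm_trans_apply] at hx ⊢
  rcases hx with h | h
  · by_cases h1 : T x = T₀ x
    · exact Or.inr (Or.inl (Or.inl (h1 ▸ h)))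
    · exact Or.inl (Or.inr (Or.inl h1))
  · by_cases h1 : S.symm x = S₀.symm x
    · exact Or.inr (Or.inr (Or.inr (h1 ▸ h)))
    · exact Or.inl (Or.inl (Or.inr h1))

end UniformTopAux

open UniformTopAux in
/-- `Homeo(X)` with the uniform topology `τ` is a Hausdorff topological group:
composition (here `(S, T) ↦ S ∘ T = T.trans S`) and inversion are continuous, and the
space is Hausdorff. -/
theorem stmt_18 {X : Type*} [TopologicalSpace X] [CompactSpace X]
    [TopologicalSpace.MetrizableSpace X] [TotallyDisconnectedSpace X] [PerfectSpace X]
    [Nonempty X] [MeasurableSpace X] [BorelSpace X] :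
    @Continuous ((X ≃ₜ X) × (X ≃ₜ X)) (X ≃ₜ X)
      (@instTopologicalSpaceProd _ _ (uniformTopology X) (uniformTopology X))
      (uniformTopology X) (fun p => p.2.trans p.1) ∧
    @Continuous (X ≃ₜ X) (X ≃ₜ X) (uniformTopology X) (uniformTopology X)
      Homeomorph.symm ∧
    @T2Space (X ≃ₜ X) (uniformTopology X) := by
  letI t : TopologicalSpace (X ≃ₜ X) := uniformTopology X
  have hbasic : ∀ (R : X ≃ₜ X) (k : ℕ) (μ : Fin k → Measure X),
      (∀ i, IsProbabilityMeasure (μ i)) → ∀ ε : ℝ, 0 < ε →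
      IsOpen {S : X ≃ₜ X | ∀ i, μ i (Ediff S R) < ENNReal.ofReal ε} := by
    intro R k μ hμ ε hε
    exact TopologicalSpace.GenerateOpen.basic _ ⟨R, k, μ, hμ, ε, hε, rfl⟩
  refine ⟨?_, ?_, ?_⟩
  · -- continuity of composition
    refine continuous_generateFrom_iff.2 ?_
    rintro U ⟨R, k, μ, hμ, ε, hε, rfl⟩
    rw [isOpen_iff_forall_mem_open]
    rintro ⟨S₀, T₀⟩ hmem
    simp only [mem_preimage, mem_setOf_eq] at hmem
    set c := Finset.univ.sup (fun i => μ i (Ediff (T₀.trans S₀) R)) with hc_def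
    have hc : c < ENNReal.ofReal ε := by
      refine (Finset.sup_lt_iff ?_).2 fun i _ => hmem i
      simpa using ENNReal.ofReal_pos.2 hε
    have hct : c ≠ ⊤ := (hc.trans ENNReal.ofReal_lt_top).ne
    set δ : ℝ := ε - c.toReal with hδ_def
    have hδ : 0 < δ := sub_pos.2 ((ENNReal.lt_ofReal_iff_toReal_lt hct).1 hc)
    have hδ4 : 0 < δ / 4 := by positivity
    haveI := fun i => hμ i
    have hT₀ : ∀ i, AEMeasurable (⇑T₀) (μ i) := fun i =>
      T₀.continuous.measurable.aemeasurable
    have hS₀ : ∀ i, AEMeasurable (⇑S₀.symm) (μ i) := fun i =>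
      S₀.symm.continuous.measurable.aemeasurable
    refine ⟨({S : X ≃ₜ X | ∀ i, μ i (Ediff S S₀) < ENNReal.ofReal (δ / 4)} ∩
             {S : X ≃ₜ X | ∀ i, ((μ i).map T₀) (Ediff S S₀) < ENNReal.ofReal (δ / 4)}) ×ˢ
            ({T : X ≃ₜ X | ∀ i, μ i (Ediff T T₀) < ENNReal.ofReal (δ / 4)} ∩
             {T : X ≃ₜ X | ∀ i, ((μ i).map S₀.symm) (Ediff T T₀) < ENNReal.ofReal (δ / 4)}),
            ?_, ?_, ?_⟩
    · rintro ⟨S, T⟩ ⟨⟨hS1, hS2⟩, hT1, hT2⟩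
      simp only [mem_preimage, mem_setOf_eq] at hS1 hS2 hT1 hT2 ⊢
      intro i
      have hmap1 : μ i (⇑T₀ ⁻¹' Ediff S S₀) < ENNReal.ofReal (δ / 4) :=
        lt_of_le_of_lt (Measure.le_map_apply (hT₀ i) _) (hS2 i)
      have hmap2 : μ i (⇑S₀.symm ⁻¹' Ediff T T₀) < ENNReal.ofReal (δ / 4) :=
        lt_of_le_of_lt (Measure.le_map_apply (hS₀ i) _) (hT2 i)
      have hmid : μ i (Ediff (T.trans S) (T₀.trans S₀)) < ENNReal.ofReal δ := by
        calc μ i (Ediff (T.trans S) (T₀.trans S₀))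
            ≤ μ i ((Ediff S S₀ ∪ Ediff T T₀) ∪
                (⇑T₀ ⁻¹' Ediff S S₀ ∪ ⇑S₀.symm ⁻¹' Ediff T T₀)) :=
              measure_mono (Ediff_comp S S₀ T T₀)
          _ ≤ (μ i (Ediff S S₀) + μ i (Ediff T T₀)) +
                (μ i (⇑T₀ ⁻¹' Ediff S S₀) + μ i (⇑S₀.symm ⁻¹' Ediff T T₀)) :=
              le_trans (measure_union_le _ _)
                (add_le_add (measure_union_le _ _) (measure_union_le _ _))
          _ < (ENNReal.ofReal (δ / 4) + ENNReal.ofReal (δ / 4)) +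
                (ENNReal.ofReal (δ / 4) + ENNReal.ofReal (δ / 4)) :=
              ENNReal.add_lt_add (ENNReal.add_lt_add (hS1 i) (hT1 i))
                (ENNReal.add_lt_add hmap1 hmap2)
          _ = ENNReal.ofReal δ := by
              rw [← ENNReal.ofReal_add hδ4.le hδ4.le,
                ← ENNReal.ofReal_add (by positivity) (by positivity)]
              congr 1
              ring
      have htail : μ i (Ediff (T₀.trans S₀) R) ≤ c :=
        Finset.le_sup (f := fun i => μ i (Ediff (T₀.trans S₀) R)) (Finset.mem_univ i)
      have htailne : μ i (Ediff (T₀.trans S₀) R) ≠ ⊤ := ne_top_of_le_ne_top hct htail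
      calc μ i (Ediff (T.trans S) R)
          ≤ μ i (Ediff (T.trans S) (T₀.trans S₀)) + μ i (Ediff (T₀.trans S₀) R) :=
            le_trans (measure_mono (Ediff_triangle _ _ _)) (measure_union_le _ _)
        _ < ENNReal.ofReal δ + c :=
            ENNReal.add_lt_add_of_lt_of_le htailne hmid htail
        _ = ENNReal.ofReal ε := by
            rw [hδ_def, ENNReal.ofReal_sub _ ENNReal.toReal_nonneg,
              ENNReal.ofReal_toReal hct, tsub_add_cancel_of_le hc.le]
    · exact IsOpen.prod
        ((hbasic S₀ k μ hμ _ hδ4).inter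
          (hbasic S₀ k (fun i => (μ i).map T₀)
            (fun i => Measure.isProbabilityMeasure_map (hT₀ i)) _ hδ4))
        ((hbasic T₀ k μ hμ _ hδ4).inter
          (hbasic T₀ k (fun i => (μ i).map S₀.symm)
            (fun i => Measure.isProbabilityMeasure_map (hS₀ i)) _ hδ4))
    · constructor <;> constructor <;>
        · intro i
          simp [Ediff_self, ENNReal.ofReal_pos, hδ4]
  · -- continuity of inversion
    refine continuous_generateFrom_iff.2 ?_
    rintro U ⟨R, k, μ, hμ, ε, hε, rfl⟩
    have hpre : (Homeomorph.symm ⁻¹'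
        {S : X ≃ₜ X | ∀ i, μ i (Ediff S R) < ENNReal.ofReal ε}) =
        {S : X ≃ₜ X | ∀ i, μ i (Ediff S R.symm) < ENNReal.ofReal ε} := by
      ext S
      simp only [mem_preimage, mem_setOf_eq, Ediff_symm' S R]
    rw [show (Homeomorph.symm ⁻¹'
        {S : X ≃ₜ X | ∀ i,
          μ i ({x | S x ≠ R x} ∪ {x | S.symm x ≠ R.symm x}) < ENNReal.ofReal ε}) =
        Homeomorph.symm ⁻¹' {S : X ≃ₜ X | ∀ i, μ i (Ediff S R) < ENNReal.ofReal ε} from rfl,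
      hpre]
    exact hbasic R.symm k μ hμ ε hε
  · -- Hausdorff
    haveI : MeasurableSingletonClass X :=
      ⟨fun x => (isClosed_singleton (x := x)).measurableSet⟩
    constructor
    intro S T hST
    have hx : ∃ x : X, S x ≠ T x := by
      by_contra h
      push_neg at h
      exact hST (Homeomorph.ext h)
    obtain ⟨x, hx⟩ := hx
    refine ⟨{R : X ≃ₜ X | ∀ _i : Fin 1,
        (fun _ : Fin 1 => Measure.dirac x) _i (Ediff R S) < ENNReal.ofReal 1},
      {R : X ≃ₜ X | ∀ _i : Fin 1,
        (fun _ : Fin 1 => Measure.dirac x) _i (Ediff R T) < ENNReal.ofReal 1},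
      hbasic S 1 _ (fun _ => inferInstance) 1 one_pos,
      hbasic T 1 _ (fun _ => inferInstance) 1 one_pos, ?_, ?_, ?_⟩
    · intro i; simp [Ediff_self, ENNReal.ofReal_pos]
    · intro i; simp [Ediff_self, ENNReal.ofReal_pos]
    · rw [Set.disjoint_left]
      rintro R hRS hRT
      have h1 := hRS 0
      have h2 := hRT 0
      simp only at h1 h2
      have hxS : R x = S x := by
        by_contra hne
        have hxmem : x ∈ Ediff R S := Or.inl hne
        rw [Measure.dirac_apply, Set.indicator_of_mem hxmem] at h1
        simp [ENNReal.ofReal_one] at h1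
      have hxT : R x = T x := by
        by_contra hne
        have hxmem : x ∈ Ediff R T := Or.inl hne
        rw [Measure.dirac_apply, Set.indicator_of_mem hxmem] at h2
        simp [ENNReal.ofReal_one] at h2
      exact hx (hxS ▸ hxT)
end
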